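/- arXiv:1801.01982 — 10 statements merged into one kernel-verified Lean document; each statement's English description precedes it below -/
import Mathlib

section
/- Let n ≥ 2 and q ≥ 2 be integers and s ∈ [-1,1). Let f be a real polynomial of degree m with 0 ≤ m ≤ n such that: (A1) f(t) ≤ 0 for every t ∈ T_n ∩ [-1,s]; (A2) the coefficients in the Krawtchouk expansion f(t) = Σ_{i=0}^m f_i Q_i^{(n,q)}(t) satisfy f_0 > 0 and f_i ≥ 0 for every i. Then every code C ⊆ H(n,q) with s(C) ≤ s satisfies |C| ≤ f(1)/f_0. -/
/-- Generalized binomial coefficient `C(x,j) = x(x-1)⋯(x-j+1)/j!` as a function of a real `x`. -/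
noncomputable def genChoose (x : ℝ) (j : ℕ) : ℝ :=
  (descPochhammer ℝ j).eval x / (Nat.factorial j : ℝ)

/-- The `q`-ary Krawtchouk polynomial `K_i^{(n,q)}(x)`. -/
noncomputable def kraw (n q i : ℕ) (x : ℝ) : ℝ :=
  ∑ j ∈ Finset.range (i + 1),
    (-1 : ℝ) ^ j * ((q : ℝ) - 1) ^ (i - j) * genChoose x j * genChoose ((n : ℝ) - x) (i - j)

/-- The normalized Krawtchouk polynomial `Q_i^{(n,q)}(t) = K_i^{(n,q)}(n(1-t)/2)/r_i`,
with `r_i = (q-1)^i C(n,i)`. -/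
noncomputable def normKraw (n q i : ℕ) (t : ℝ) : ℝ :=
  kraw n q i ((n : ℝ) * (1 - t) / 2) / (((q : ℝ) - 1) ^ i * (n.choose i : ℝ))

open Polynomial Finset

/-!
Delsarte's linear programming argument. Relabel the alphabet as `ZMod q` and let `ψ` be a primitive
additive character. With `χ_z(x) = ∏ⱼ ψ(zⱼ xⱼ)`, the sum `∑_{wt z = i} χ_z(x) · conj χ_z(y)` is the
coefficient of `X^i` in `∏ⱼ (1 + (∑_{a ≠ 0} ψ(a (xⱼ - yⱼ))) X) = (1 - X)^d (1 + (q-1) X)^(n-d)`,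
`d = d(x,y)`, which is the generating function of `K_i(d)`. Hence
`∑_{x,y ∈ C} K_i(d(x,y)) = ∑_{wt z = i} |∑_{x ∈ C} χ_z(x)|² ≥ 0`.
Now sum `f(⟨x,y⟩)` over all pairs of codewords: expanding `f` in the `Q_i` with `f_i ≥ 0` and
keeping only `i = 0` bounds the sum below by `f_0 |C|²`, while (A1) makes every off-diagonal
term nonpositive, so the sum is at most `|C| f(1)`.
-/

lemma genChoose_natCast (k j : ℕ) : genChoose k j = k.choose j := by
  rw [genChoose, descPochhammer_eval_eq_descFactorial, Nat.descFactorial_eq_factorial_mul_choose]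
  push_cast
  field_simp

lemma coeff_one_add_C_mul_X_pow {R : Type*} [CommSemiring R] (a : R) (N k : ℕ) :
    ((1 + C a * X) ^ N).coeff k = a ^ k * N.choose k := by
  rw [add_comm, add_pow, finsetSum_coeff]
  simp_rw [one_pow, mul_one, mul_pow, ← C_pow, mul_comm (C _ * _), ← C_eq_natCast, ← mul_assoc,
    ← C_mul, coeff_C_mul_X_pow]
  rw [sum_ite_eq]
  split_ifs with h
  · ring
  · simp [Nat.choose_eq_zero_of_lt (by simpa using h)]

lemma kraw_natCast_eq_coeff {n d : ℕ} (hd : d ≤ n) (q i : ℕ) :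
    kraw n q i d = ((1 + C (-1 : ℝ) * X) ^ d * (1 + C ((q : ℝ) - 1) * X) ^ (n - d)).coeff i := by
  rw [coeff_mul, Nat.sum_antidiagonal_eq_sum_range_succ_mk, kraw]
  refine sum_congr rfl fun j _ => ?_
  rw [coeff_one_add_C_mul_X_pow, coeff_one_add_C_mul_X_pow, genChoose_natCast,
    ← Nat.cast_sub hd, genChoose_natCast]
  ring

lemma sum_prod_hammingNorm_eq_coeff {ι R S : Type*} [Fintype ι] [DecidableEq ι] [Fintype R]
    [DecidableEq R] [Zero R] [CommSemiring S] (u : ι → R → S) (i : ℕ) :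
    ∑ z : ι → R with hammingNorm z = i, ∏ j, u j (z j) =
      (∏ j, (C (u j 0) + C (∑ a ∈ univ.erase 0, u j a) * X)).coeff i := by
  have hfactor : ∀ j, C (u j 0) + C (∑ a ∈ univ.erase 0, u j a) * X =
      ∑ a, C (u j a) * X ^ (if a ≠ 0 then 1 else 0) := fun j => by
    rw [← add_sum_erase _ _ (mem_univ 0), map_sum, sum_mul]
    congr 1
    · simp
    · exact sum_congr rfl fun a ha => by rw [if_pos (ne_of_mem_erase ha), pow_one]
  simp_rw [hfactor, Fintype.prod_sum, prod_mul_distrib, ← map_prod, prod_pow_eq_pow_sum,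
    ← card_filter, finsetSum_coeff, coeff_C_mul_X_pow, sum_filter]
  exact sum_congr rfl fun z _ => by simp only [hammingNorm, eq_comm]

lemma sum_prod_addChar_hammingNorm_eq_kraw {ι R : Type*} [Fintype ι] [DecidableEq ι]
    [CommRing R] [Fintype R] [DecidableEq R] {ψ : AddChar R ℂ} (hψ : ψ.IsPrimitive)
    (x y : ι → R) (i : ℕ) :
    ∑ z : ι → R with hammingNorm z = i, ∏ j, ψ (z j * (x j - y j)) =
      kraw (Fintype.card ι) (Fintype.card R) i (hammingDist x y) := by
  have hfactor : ∀ j, C (ψ (0 * (x j - y j))) + C (∑ a ∈ univ.erase 0, ψ (a * (x j - y j))) * X =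
      if x j ≠ y j then 1 + C (-1) * X else 1 + C ((Fintype.card R : ℂ) - 1) * X := fun j => by
    rw [sum_erase_eq_sub (mem_univ 0), AddChar.sum_mulShift _ hψ]
    by_cases h : x j = y j <;> simp [h, sub_eq_zero]
  have hcard : #{j | ¬ x j ≠ y j} = Fintype.card ι - hammingDist x y := by
    rw [← card_univ, ← card_filter_add_card_filter_not (s := univ) (fun j => x j ≠ y j)]
    simp [hammingDist]
  rw [sum_prod_hammingNorm_eq_coeff (fun j a => ψ (a * (x j - y j))),
    prod_congr rfl fun j _ => hfactor j, prod_ite, prod_const, prod_const, hcard,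
    kraw_natCast_eq_coeff hammingDist_le_card_fintype]
  show _ = Complex.ofRealHom _
  rw [← coeff_map]
  simp [hammingDist]

lemma sum_sum_kraw_hammingDist_nonneg_of_isPrimitive {ι R : Type*} [Fintype ι] [DecidableEq ι]
    [CommRing R] [Fintype R] [DecidableEq R] {ψ : AddChar R ℂ} (hψ : ψ.IsPrimitive)
    (C : Finset (ι → R)) (i : ℕ) :
    0 ≤ ∑ x ∈ C, ∑ y ∈ C, kraw (Fintype.card ι) (Fintype.card R) i (hammingDist x y) := by
  set χ : (ι → R) → (ι → R) → ℂ := fun z x => ∏ j, ψ (z j * x j)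
  have hχ : ∀ z x y, ∏ j, ψ (z j * (x j - y j)) = χ z x * starRingEnd ℂ (χ z y) := fun z x y => by
    simp only [χ, map_prod, ← prod_mul_distrib, sub_eq_add_neg, mul_add, mul_neg,
      AddChar.map_add_eq_mul, AddChar.map_neg_eq_conj]
  suffices h : ((∑ x ∈ C, ∑ y ∈ C,
      kraw (Fintype.card ι) (Fintype.card R) i (hammingDist x y) : ℝ) : ℂ) =
      ((∑ z : ι → R with hammingNorm z = i, Complex.normSq (∑ x ∈ C, χ z x) : ℝ) : ℂ) by
    rw [Complex.ofReal_inj.mp h]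
    exact sum_nonneg fun z _ => Complex.normSq_nonneg _
  push_cast
  simp_rw [← sum_prod_addChar_hammingNorm_eq_kraw hψ, hχ, ← Complex.mul_conj, map_sum,
    sum_mul_sum]
  exact (sum_congr rfl fun x _ => sum_comm).trans sum_comm

lemma sum_sum_kraw_hammingDist_nonneg {ι α : Type*} [Fintype ι] [Fintype α] [DecidableEq α]
    [Nonempty α] (C : Finset (ι → α)) (i : ℕ) :
    0 ≤ ∑ x ∈ C, ∑ y ∈ C, kraw (Fintype.card ι) (Fintype.card α) i (hammingDist x y) := by
  classical
  -- Hamming distance only sees which letters agree, so the alphabet may be relabelled as `ZMod q`.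
  set q := Fintype.card α
  have : NeZero q := ⟨Fintype.card_ne_zero⟩
  let e : α ≃ ZMod q := Fintype.equivOfCardEq (ZMod.card q).symm
  let E : (ι → α) ↪ (ι → ZMod q) := ⟨fun x j => e (x j), fun x y h => funext fun j =>
    e.injective (congr_fun h j)⟩
  have h := sum_sum_kraw_hammingDist_nonneg_of_isPrimitive (ZMod.isPrimitive_stdAddChar q)
    (C.map E) i
  simp only [sum_map, ZMod.card] at h
  convert h using 5 with x _ y _
  exact (hammingDist_comp (fun _ => e) fun _ => e.injective).symm

lemma normKraw_zero (n q : ℕ) (t : ℝ) : normKraw n q 0 t = 1 := by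
  simp [normKraw, kraw, genChoose]

lemma normKraw_one_sub_two_mul_div {n d : ℕ} (hd : d ≤ n) (q i : ℕ) :
    normKraw n q i (1 - 2 * d / n) = kraw n q i d / (((q : ℝ) - 1) ^ i * n.choose i) := by
  rcases Nat.eq_zero_or_pos n with rfl | hn
  · simp [normKraw, Nat.le_zero.mp hd]
  · rw [normKraw]
    congr 2
    field_simp
    ring

lemma sum_sum_normKraw_nonneg {n q : ℕ} (hq : 1 ≤ q) (C : Finset (Fin n → Fin q)) (i : ℕ) :
    0 ≤ ∑ x ∈ C, ∑ y ∈ C, normKraw n q i (1 - 2 * (hammingDist x y : ℝ) / n) := by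
  have : Nonempty (Fin q) := Fin.pos_iff_nonempty.mp hq
  have hd : ∀ x y : Fin n → Fin q, hammingDist x y ≤ n := fun x y => by
    simpa using hammingDist_le_card_fintype (x := x) (y := y)
  have hq' : (0 : ℝ) ≤ q - 1 := by simpa using hq
  simp_rw [normKraw_one_sub_two_mul_div (hd _ _), ← sum_div]
  refine div_nonneg ?_ (mul_nonneg (pow_nonneg hq' i) (Nat.cast_nonneg _))
  simpa using sum_sum_kraw_hammingDist_nonneg C i

lemma one_sub_two_mul_hammingDist_div_eq {n : ℕ} {α : Type*} [DecidableEq α]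
    {x y : Fin n → α} (hxy : x ≠ y) :
    1 - 2 * (hammingDist x y : ℝ) / n = -1 + 2 * ((n - hammingDist x y : ℕ) : ℝ) / n := by
  have hd : hammingDist x y ≤ n := by simpa using hammingDist_le_card_fintype (x := x) (y := y)
  have hn : (n : ℝ) ≠ 0 := by
    have := hammingDist_pos.mpr hxy
    exact_mod_cast (show n ≠ 0 by omega)
  rw [Nat.cast_sub hd]
  field_simp
  ring

lemma sum_sum_eval_le_card_mul_eval_one {n : ℕ} {α : Type*} [DecidableEq α] {s : ℝ}
    {f : ℝ[X]} (hf : ∀ i : ℕ, i ≤ n → (-1 + 2 * (i : ℝ) / (n : ℝ)) ≤ s →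
      f.eval (-1 + 2 * (i : ℝ) / (n : ℝ)) ≤ 0)
    (C : Finset (Fin n → α))
    (hC : ∀ x ∈ C, ∀ y ∈ C, x ≠ y → 1 - 2 * (hammingDist x y : ℝ) / (n : ℝ) ≤ s) :
    ∑ x ∈ C, ∑ y ∈ C, f.eval (1 - 2 * (hammingDist x y : ℝ) / n) ≤ #C * f.eval 1 := by
  rw [← nsmul_eq_mul, ← sum_const]
  refine sum_le_sum fun x hx => ?_
  have hoff : ∀ y ∈ C.erase x, f.eval (1 - 2 * (hammingDist x y : ℝ) / n) ≤ 0 := fun y hy => by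
    have hxy : x ≠ y := (ne_of_mem_erase hy).symm
    have hs := hC x hx y (mem_of_mem_erase hy) hxy
    rw [one_sub_two_mul_hammingDist_div_eq hxy] at hs ⊢
    exact hf _ (Nat.sub_le _ _) hs
  rw [← add_sum_erase _ _ hx, hammingDist_self]
  simpa using sum_nonpos hoff

lemma mul_card_sq_le_sum_sum_eval {n q m : ℕ} (hq : 1 ≤ q) {f : ℝ[X]} {F : ℕ → ℝ}
    (hexp : ∀ t : ℝ, f.eval t = ∑ i ∈ range (m + 1), F i * normKraw n q i t)
    (hF : ∀ i : ℕ, i ≤ m → 0 ≤ F i) (C : Finset (Fin n → Fin q)) :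
    F 0 * #C ^ 2 ≤ ∑ x ∈ C, ∑ y ∈ C, f.eval (1 - 2 * (hammingDist x y : ℝ) / n) := by
  have hsum : ∑ x ∈ C, ∑ y ∈ C, f.eval (1 - 2 * (hammingDist x y : ℝ) / n) =
      ∑ i ∈ range (m + 1), F i * ∑ x ∈ C, ∑ y ∈ C,
        normKraw n q i (1 - 2 * (hammingDist x y : ℝ) / n) := by
    simp_rw [hexp, mul_sum]
    exact (sum_congr rfl fun x _ => sum_comm).trans sum_comm
  have hzero : F 0 * #C ^ 2 = F 0 * ∑ x ∈ C, ∑ y ∈ C,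
      normKraw n q 0 (1 - 2 * (hammingDist x y : ℝ) / n) := by
    simp [normKraw_zero, sq]
  rw [hsum, hzero]
  exact single_le_sum (f := fun i => F i * ∑ x ∈ C, ∑ y ∈ C,
      normKraw n q i (1 - 2 * (hammingDist x y : ℝ) / n))
    (fun i hi => mul_nonneg (hF i (by simpa [Nat.lt_succ_iff] using hi))
      (sum_sum_normKraw_nonneg hq C i)) (by simp)

theorem stmt0_general (n q m : ℕ) (hq : 2 ≤ q)
    (s : ℝ)
    (f : Polynomial ℝ)
    (F : ℕ → ℝ)
    (hexp : ∀ t : ℝ, f.eval t = ∑ i ∈ Finset.range (m + 1), F i * normKraw n q i t)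
    (hA1 : ∀ i : ℕ, i ≤ n → (-1 + 2 * (i : ℝ) / (n : ℝ)) ≤ s →
      f.eval (-1 + 2 * (i : ℝ) / (n : ℝ)) ≤ 0)
    (hA20 : 0 < F 0) (hA2 : ∀ i : ℕ, i ≤ m → 0 ≤ F i)
    (C : Finset (Fin n → Fin q))
    (hC : ∀ x ∈ C, ∀ y ∈ C, x ≠ y → 1 - 2 * (hammingDist x y : ℝ) / (n : ℝ) ≤ s) :
    (C.card : ℝ) ≤ f.eval 1 / F 0 := by
  have hq1 : 1 ≤ q := by omega
  rcases C.eq_empty_or_nonempty with rfl | hC_ne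
  · obtain ⟨x⟩ : Nonempty (Fin n → Fin q) := ⟨fun _ => ⟨0, hq1⟩⟩
    have hF0 : F 0 ≤ f.eval 1 := by
      simpa using mul_card_sq_le_sum_sum_eval hq1 hexp hA2 {x}
    simpa using div_nonneg (hA20.le.trans hF0) hA20.le
  have hcard : (0 : ℝ) < #C := by exact_mod_cast hC_ne.card_pos
  rw [le_div_iff₀ hA20]
  refine le_of_mul_le_mul_right ?_ hcard
  calc #C * F 0 * #C = F 0 * #C ^ 2 := by ring
    _ ≤ ∑ x ∈ C, ∑ y ∈ C, f.eval (1 - 2 * (hammingDist x y : ℝ) / n) :=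
      mul_card_sq_le_sum_sum_eval hq1 hexp hA2 C
    _ ≤ #C * f.eval 1 := sum_sum_eval_le_card_mul_eval_one hA1 C hC
    _ = f.eval 1 * #C := mul_comm _ _

/-- The linear programming (Delsarte) bound, Theorem 1 of the paper. -/
theorem stmt0 (n q m : ℕ) (hn : 2 ≤ n) (hq : 2 ≤ q) (hm : m ≤ n)
    (s : ℝ) (hs : -1 ≤ s) (hs1 : s < 1)
    (f : Polynomial ℝ) (hdeg : f.natDegree = m)
    (F : ℕ → ℝ)
    (hexp : ∀ t : ℝ, f.eval t = ∑ i ∈ Finset.range (m + 1), F i * normKraw n q i t)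
    (hA1 : ∀ i : ℕ, i ≤ n → (-1 + 2 * (i : ℝ) / (n : ℝ)) ≤ s →
      f.eval (-1 + 2 * (i : ℝ) / (n : ℝ)) ≤ 0)
    (hA20 : 0 < F 0) (hA2 : ∀ i : ℕ, i ≤ m → 0 ≤ F i)
    (C : Finset (Fin n → Fin q))
    (hC : ∀ x ∈ C, ∀ y ∈ C, x ≠ y → 1 - 2 * (hammingDist x y : ℝ) / (n : ℝ) ≤ s) :
    (C.card : ℝ) ≤ f.eval 1 / F 0 :=
  stmt0_general n q m hq s f F hexp hA1 hA20 hA2 C hC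
end

section
/- With the parameters of the refinement of the third Levenshtein bound, the Krawtchouk expansion f(t) = f_0 + f_1 Q_1^{(n,q)}(t) + f_2 Q_2^{(n,q)}(t) + f_3 Q_3^{(n,q)}(t) of the cubic f has coefficients f_3 = 8(q-1)³(n-2)(n-1)/(q³n²), f_2 = 8(q-1)²(n-1)A/(q³n²(q+j-1)), f_1 = 8(q-1)((eq-B)² + C)/(q³n²), and f_0 = 8(a²(2-q-j) + Da + E)/(q³n³), where A = -j² + (2eq-1)j + (q-1)(2n+2eq+q-4), B = [j(j-2) - n(q-1) + (q/2)(3j+q-1)]/(j+q-1), and C = -j² + (2-q)j + (3n-2)(q-1) - q²/4. -/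
lemma genChoose_zero (x : ℝ) : genChoose x 0 = 1 := by
  simp [genChoose]

lemma genChoose_one (x : ℝ) : genChoose x 1 = x := by
  simp [genChoose]

lemma genChoose_two (x : ℝ) : genChoose x 2 = x * (x - 1) / 2 := by
  simp [genChoose, descPochhammer_succ_eval, Nat.factorial]

lemma genChoose_three (x : ℝ) : genChoose x 3 = x * (x - 1) * (x - 2) / 6 := by
  simp [genChoose, descPochhammer_succ_eval, Nat.factorial]

lemma Nat.cast_choose_eq_genChoose (n i : ℕ) : (n.choose i : ℝ) = genChoose n i :=
  Nat.cast_choose_eq_descPochhammer_div (K := ℝ) n i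

lemma kraw_one (n q : ℕ) (x : ℝ) : kraw n q 1 x = ((q : ℝ) - 1) * (n - x) - x := by
  simp only [kraw, Finset.sum_range_succ, Finset.sum_range_zero, Nat.reduceAdd, Nat.reduceSub,
    genChoose_zero, genChoose_one]
  ring

lemma kraw_two (n q : ℕ) (x : ℝ) :
    kraw n q 2 x =
      ((q : ℝ) - 1) ^ 2 * genChoose (n - x) 2 - ((q : ℝ) - 1) * x * (n - x) + genChoose x 2 := by
  simp only [kraw, Finset.sum_range_succ, Finset.sum_range_zero, Nat.reduceAdd, Nat.reduceSub,
    genChoose_zero, genChoose_one]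
  ring

lemma kraw_three (n q : ℕ) (x : ℝ) :
    kraw n q 3 x =
      ((q : ℝ) - 1) ^ 3 * genChoose (n - x) 3 - ((q : ℝ) - 1) ^ 2 * x * genChoose (n - x) 2
        + ((q : ℝ) - 1) * genChoose x 2 * (n - x) - genChoose x 3 := by
  simp only [kraw, Finset.sum_range_succ, Finset.sum_range_zero, Nat.reduceAdd, Nat.reduceSub,
    genChoose_zero, genChoose_one]
  ring

lemma three_le_of_lt_levenshtein_bound {n q : ℕ} {j : ℝ} (hq : 2 ≤ q) (hnq : q ≤ n)
    (hj0 : 0 ≤ j)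
    (hjS : j < (Real.sqrt ((q : ℝ) ^ 2 + 4 * ((q : ℝ) - 1) * ((n : ℝ) - 2)) - (q : ℝ)) / 2) :
    3 ≤ n := by
  by_contra! hn
  obtain rfl : n = 2 := by omega
  rw [Nat.cast_ofNat, sub_self, mul_zero, add_zero, Real.sqrt_sq (Nat.cast_nonneg q)] at hjS
  linarith

theorem stmt1_general (n q : ℕ) (hq : 2 ≤ q) (hnq : q ≤ n) (d : ℕ)
    (j : ℝ) (hj : j = (q : ℝ) * ((n : ℝ) - 1 - (d : ℝ)) - ((n : ℝ) - 2))
    (hj0 : 0 ≤ j)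
    (hjS : j < (Real.sqrt ((q : ℝ) ^ 2 + 4 * ((q : ℝ) - 1) * ((n : ℝ) - 2)) - (q : ℝ)) / 2)
    (s : ℝ) (hs : s = 1 - 2 * (d : ℝ) / (n : ℝ))
    (d0 : ℝ) (hd0 : d0 = (n : ℝ) - j * ((n : ℝ) - 1) / ((q : ℝ) * (j + (q : ℝ) - 1)))
    (e : ℝ)
    (A B Cc D E a : ℝ)
    (hA : A = -j ^ 2 + (2 * e * (q : ℝ) - 1) * j +
      ((q : ℝ) - 1) * (2 * (n : ℝ) + 2 * e * (q : ℝ) + (q : ℝ) - 4))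
    (hB : B = (j * (j - 2) - (n : ℝ) * ((q : ℝ) - 1) +
      ((q : ℝ) / 2) * (3 * j + (q : ℝ) - 1)) / (j + (q : ℝ) - 1))
    (hC : Cc = -j ^ 2 + (2 - (q : ℝ)) * j + (3 * (n : ℝ) - 2) * ((q : ℝ) - 1) - (q : ℝ) ^ 2 / 4)
    (hD : D = (j + (q : ℝ) - 1) * (2 * (n : ℝ) * ((q : ℝ) - 1) - (q : ℝ)) + (q : ℝ))
    (hE : E = -(n : ℝ) * ((n : ℝ) - 1) * ((q : ℝ) - 1) ^ 2 * (j + (q : ℝ)))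
    (ha : a = ((n : ℝ) - 1) * ((q : ℝ) - 1) * ((q : ℝ) + j) / ((q : ℝ) + j - 1) + e * (q : ℝ)) :
    ∀ t : ℝ,
      (t - 1 + 2 * (d0 + e) / (n : ℝ)) * (t - 1 + 2 * (d0 + e - 1) / (n : ℝ)) * (t - s) =
        8 * (a ^ 2 * (2 - (q : ℝ) - j) + D * a + E) / ((q : ℝ) ^ 3 * (n : ℝ) ^ 3) +
        (8 * ((q : ℝ) - 1) * ((e * (q : ℝ) - B) ^ 2 + Cc) / ((q : ℝ) ^ 3 * (n : ℝ) ^ 2)) *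
          normKraw n q 1 t +
        (8 * ((q : ℝ) - 1) ^ 2 * ((n : ℝ) - 1) * A /
          ((q : ℝ) ^ 3 * (n : ℝ) ^ 2 * ((q : ℝ) + j - 1))) * normKraw n q 2 t +
        (8 * ((q : ℝ) - 1) ^ 3 * ((n : ℝ) - 2) * ((n : ℝ) - 1) /
          ((q : ℝ) ^ 3 * (n : ℝ) ^ 2)) * normKraw n q 3 t := by
  intro t
  have hqR : (2 : ℝ) ≤ q := by exact_mod_cast hq
  have hnR : (3 : ℝ) ≤ n := by exact_mod_cast three_le_of_lt_levenshtein_bound hq hnq hj0 hjS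
  have hq0 : (q : ℝ) ≠ 0 := by positivity
  have hq1 : (q : ℝ) - 1 ≠ 0 := by linarith
  have hn0 : (n : ℝ) ≠ 0 := by positivity
  have hn1 : (n : ℝ) - 1 ≠ 0 := by linarith
  have hn2 : (n : ℝ) - 2 ≠ 0 := by linarith
  have hqj : (q : ℝ) + j - 1 ≠ 0 := by linarith
  have hjq : j + (q : ℝ) - 1 ≠ 0 := by linarith
  have hd : (d : ℝ) = n - 1 - (n - 2 + j) / q := by field_simp; linarith
  subst hs hd0 hA hB hC hD hE ha
  simp only [normKraw, Nat.cast_choose_eq_genChoose, kraw_one, kraw_two, kraw_three,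
    genChoose_one, genChoose_two, genChoose_three, hd]
  field_simp
  ring

/-- The Krawtchouk expansion of the refining cubic for the third Levenshtein bound:
`f(t) = f₀ + f₁ Q₁ + f₂ Q₂ + f₃ Q₃` with the explicit coefficient formulas. -/
theorem stmt1 (n q : ℕ) (hq : 2 ≤ q) (hnq : q ≤ n) (d : ℕ) (hd : 1 ≤ d)
    (j : ℝ) (hj : j = (q : ℝ) * ((n : ℝ) - 1 - (d : ℝ)) - ((n : ℝ) - 2))
    (hj0 : 0 ≤ j)
    (hjS : j < (Real.sqrt ((q : ℝ) ^ 2 + 4 * ((q : ℝ) - 1) * ((n : ℝ) - 2)) - (q : ℝ)) / 2)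
    (s : ℝ) (hs : s = 1 - 2 * (d : ℝ) / (n : ℝ))
    (d0 : ℝ) (hd0 : d0 = (n : ℝ) - j * ((n : ℝ) - 1) / ((q : ℝ) * (j + (q : ℝ) - 1)))
    (e : ℝ) (he0 : 0 < e) (he1 : e ≤ 1) (heint : ∃ k : ℤ, d0 + e = (k : ℝ))
    (A B Cc D E a : ℝ)
    (hA : A = -j ^ 2 + (2 * e * (q : ℝ) - 1) * j +
      ((q : ℝ) - 1) * (2 * (n : ℝ) + 2 * e * (q : ℝ) + (q : ℝ) - 4))
    (hB : B = (j * (j - 2) - (n : ℝ) * ((q : ℝ) - 1) +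
      ((q : ℝ) / 2) * (3 * j + (q : ℝ) - 1)) / (j + (q : ℝ) - 1))
    (hC : Cc = -j ^ 2 + (2 - (q : ℝ)) * j + (3 * (n : ℝ) - 2) * ((q : ℝ) - 1) - (q : ℝ) ^ 2 / 4)
    (hD : D = (j + (q : ℝ) - 1) * (2 * (n : ℝ) * ((q : ℝ) - 1) - (q : ℝ)) + (q : ℝ))
    (hE : E = -(n : ℝ) * ((n : ℝ) - 1) * ((q : ℝ) - 1) ^ 2 * (j + (q : ℝ)))
    (ha : a = ((n : ℝ) - 1) * ((q : ℝ) - 1) * ((q : ℝ) + j) / ((q : ℝ) + j - 1) + e * (q : ℝ)) :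
    ∀ t : ℝ,
      (t - 1 + 2 * (d0 + e) / (n : ℝ)) * (t - 1 + 2 * (d0 + e - 1) / (n : ℝ)) * (t - s) =
        8 * (a ^ 2 * (2 - (q : ℝ) - j) + D * a + E) / ((q : ℝ) ^ 3 * (n : ℝ) ^ 3) +
        (8 * ((q : ℝ) - 1) * ((e * (q : ℝ) - B) ^ 2 + Cc) / ((q : ℝ) ^ 3 * (n : ℝ) ^ 2)) *
          normKraw n q 1 t +
        (8 * ((q : ℝ) - 1) ^ 2 * ((n : ℝ) - 1) * A /
          ((q : ℝ) ^ 3 * (n : ℝ) ^ 2 * ((q : ℝ) + j - 1))) * normKraw n q 2 t +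
        (8 * ((q : ℝ) - 1) ^ 3 * ((n : ℝ) - 2) * ((n : ℝ) - 1) /
          ((q : ℝ) ^ 3 * (n : ℝ) ^ 2)) * normKraw n q 3 t :=
  stmt1_general n q hq hnq d j hj hj0 hjS s hs d0 hd0 e A B Cc D E a hA hB hC hD hE ha
end

section
/- For all integers n ≥ 2 and q ≥ 2, all real j with 0 ≤ j ≤ (S1 - q)/2 where S1 = √(q² + 4(q-1)(n-2)), and all real e ∈ (0,1], one has A := -j² + (2eq - 1)j + (q-1)(2n + 2eq + q - 4) > 0; consequently the second Krawtchouk coefficient f_2 = 8(q-1)²(n-1)A/(q³n²(q+j-1)) of the refining cubic is positive. -/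
/-- Lemma 1 (positivity of `f₂`): for integers `n ≥ 2`, `q ≥ 2`, `j ∈ J₃` and `e ∈ (0,1]`,
the quantity `A = -j² + (2eq-1)j + (q-1)(2n+2eq+q-4)` is positive, and consequently the
second Krawtchouk coefficient `f₂ = 8(q-1)²(n-1)A/(q³n²(q+j-1))` of the refining cubic is
positive. -/
theorem stmt2 (n q : ℕ) (hn : 2 ≤ n) (hq : 2 ≤ q)
    (j e : ℝ) (hj0 : 0 ≤ j)
    (hjS : j ≤ (Real.sqrt ((q : ℝ) ^ 2 + 4 * ((q : ℝ) - 1) * ((n : ℝ) - 2)) - (q : ℝ)) / 2)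
    (he0 : 0 < e) (he1 : e ≤ 1) :
    0 < -j ^ 2 + (2 * e * (q : ℝ) - 1) * j +
        ((q : ℝ) - 1) * (2 * (n : ℝ) + 2 * e * (q : ℝ) + (q : ℝ) - 4) ∧
    0 < 8 * ((q : ℝ) - 1) ^ 2 * ((n : ℝ) - 1) *
        (-j ^ 2 + (2 * e * (q : ℝ) - 1) * j +
          ((q : ℝ) - 1) * (2 * (n : ℝ) + 2 * e * (q : ℝ) + (q : ℝ) - 4)) /
        ((q : ℝ) ^ 3 * (n : ℝ) ^ 2 * ((q : ℝ) + j - 1)) := by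
  have hn2 : (2 : ℝ) ≤ (n : ℝ) := by exact_mod_cast hn
  have hq2 : (2 : ℝ) ≤ (q : ℝ) := by exact_mod_cast hq
  set X : ℝ := (q : ℝ) ^ 2 + 4 * ((q : ℝ) - 1) * ((n : ℝ) - 2) with hX
  have hXnn : 0 ≤ X := by nlinarith
  have h1 : 2 * j + (q : ℝ) ≤ Real.sqrt X := by linarith
  have h2 : (2 * j + (q : ℝ)) ^ 2 ≤ X := by
    calc (2 * j + (q : ℝ)) ^ 2 ≤ (Real.sqrt X) ^ 2 :=
          pow_le_pow_left₀ (by linarith) h1 2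
      _ = X := Real.sq_sqrt hXnn
  have hkey : j ^ 2 + j * (q : ℝ) ≤ ((q : ℝ) - 1) * ((n : ℝ) - 2) := by nlinarith
  have hA : 0 < -j ^ 2 + (2 * e * (q : ℝ) - 1) * j +
      ((q : ℝ) - 1) * (2 * (n : ℝ) + 2 * e * (q : ℝ) + (q : ℝ) - 4) := by
    nlinarith [hkey, mul_nonneg hj0 (mul_nonneg he0.le (show (0:ℝ) ≤ (q:ℝ) by linarith)),
      mul_pos (show (0:ℝ) < (q:ℝ) - 1 by linarith)
        (show (0:ℝ) < (n:ℝ) + 2 * e * (q:ℝ) + (q:ℝ) - 2 by nlinarith)]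
  refine ⟨hA, div_pos ?_ ?_⟩
  · exact mul_pos (mul_pos (mul_pos (by norm_num) (by nlinarith)) (by linarith)) hA
  · exact mul_pos (mul_pos (by positivity) (by positivity)) (by linarith)
end

section
/- For all integers n ≥ q ≥ 2, all real j with 0 ≤ j ≤ (S1 - q)/2 where S1 = √(q² + 4(q-1)(n-2)), and all real e ∈ (0,1], one has C := -j² + (2-q)j + (3n-2)(q-1) - q²/4 > 0; consequently the first Krawtchouk coefficient f_1 = 8(q-1)((eq - B)² + C)/(q³n²) of the refining cubic is positive, where B = [j(j-2) - n(q-1) + (q/2)(3j+q-1)]/(j+q-1). -/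
/-- Lemma 2 (positivity of `f₁`): for integers `n ≥ q ≥ 2`, `j ∈ J₃` and `e ∈ (0,1]`,
the quantity `C = -j² + (2-q)j + (3n-2)(q-1) - q²/4` is positive, and consequently the
first Krawtchouk coefficient `f₁ = 8(q-1)((eq-B)² + C)/(q³n²)` of the refining cubic is
positive, where `B = [j(j-2) - n(q-1) + (q/2)(3j+q-1)]/(j+q-1)`. -/
theorem stmt3 (n q : ℕ) (hq : 2 ≤ q) (hnq : q ≤ n)
    (j e : ℝ) (hj0 : 0 ≤ j)
    (hjS : j ≤ (Real.sqrt ((q : ℝ) ^ 2 + 4 * ((q : ℝ) - 1) * ((n : ℝ) - 2)) - (q : ℝ)) / 2)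
    (he0 : 0 < e) (he1 : e ≤ 1) :
    0 < -j ^ 2 + (2 - (q : ℝ)) * j + (3 * (n : ℝ) - 2) * ((q : ℝ) - 1) - (q : ℝ) ^ 2 / 4 ∧
    0 < 8 * ((q : ℝ) - 1) *
        ((e * (q : ℝ) -
            (j * (j - 2) - (n : ℝ) * ((q : ℝ) - 1) + ((q : ℝ) / 2) * (3 * j + (q : ℝ) - 1)) /
              (j + (q : ℝ) - 1)) ^ 2 +
          (-j ^ 2 + (2 - (q : ℝ)) * j + (3 * (n : ℝ) - 2) * ((q : ℝ) - 1) - (q : ℝ) ^ 2 / 4)) /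
        ((q : ℝ) ^ 3 * (n : ℝ) ^ 2) := by
  have hq2 : (2 : ℝ) ≤ (q : ℝ) := by exact_mod_cast hq
  have hnq' : (q : ℝ) ≤ (n : ℝ) := by exact_mod_cast hnq
  have hX : (0 : ℝ) ≤ (q : ℝ) ^ 2 + 4 * ((q : ℝ) - 1) * ((n : ℝ) - 2) := by nlinarith
  have h1 : 2 * j + (q : ℝ) ≤ Real.sqrt ((q : ℝ) ^ 2 + 4 * ((q : ℝ) - 1) * ((n : ℝ) - 2)) := by
    linarith
  have h2 : (2 * j + (q : ℝ)) ^ 2 ≤ (q : ℝ) ^ 2 + 4 * ((q : ℝ) - 1) * ((n : ℝ) - 2) := by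
    have := Real.sq_sqrt hX
    nlinarith [Real.sqrt_nonneg ((q : ℝ) ^ 2 + 4 * ((q : ℝ) - 1) * ((n : ℝ) - 2))]
  have hC : 0 < -j ^ 2 + (2 - (q : ℝ)) * j + (3 * (n : ℝ) - 2) * ((q : ℝ) - 1) - (q : ℝ) ^ 2 / 4 := by
    nlinarith
  refine ⟨hC, ?_⟩
  have hsq : 0 ≤ (e * (q : ℝ) -
      (j * (j - 2) - (n : ℝ) * ((q : ℝ) - 1) + ((q : ℝ) / 2) * (3 * j + (q : ℝ) - 1)) /
        (j + (q : ℝ) - 1)) ^ 2 := sq_nonneg _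
  have hn0 : (0 : ℝ) < (n : ℝ) := by linarith
  have hq0 : (0 : ℝ) < (q : ℝ) := by linarith
  apply div_pos
  · apply mul_pos (by nlinarith) (by linarith)
  · positivity
end

section
/- With the parameters of the refinement of the third Levenshtein bound (integers n ≥ q ≥ 2, positive integer d with integer j := q(n-1-d)-(n-2) satisfying 0 ≤ j < (S1-q)/2), one has a²(2 - q - j) + Da + E > 0, i.e., the zeroth Krawtchouk coefficient f_0 = 8(a²(2-q-j) + Da + E)/(q³n³) of the refining cubic is positive. -/
set_option maxHeartbeats 1000000 in
/-- Positivity of `C0 + C1*e + C2*e^2` (the value `(a²(2-q-j)+Da+E)·(q+j-1)²`). -/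
lemma stmt4_aux (N Q j e : ℝ) (hQ : 2 ≤ Q) (hN : Q ≤ N) (hj : 0 ≤ j)
    (key : j * (j + Q) < (Q - 1) * (N - 2)) (he0 : 0 < e) (he1 : e ≤ 1) :
    0 < ((Q + j - 1) * (Q - 1) * (N - 1) * (N * (Q - 1) + 1 - j * (j + Q - 1))
          + (Q - 1) ^ 2 * (N - 1) ^ 2)
        + (Q * (Q + j - 1) * (2 * N * (Q - 1) + (Q - 2) * (j + Q) * (Q + j - 1) + 2 * j)) * e
        + (-(Q ^ 2 * (Q + j - 1) ^ 2 * (Q + j - 2))) * e ^ 2 := by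
  have hN2 : (2 : ℝ) ≤ N := le_trans hQ hN
  set C0 : ℝ := (Q + j - 1) * (Q - 1) * (N - 1) * (N * (Q - 1) + 1 - j * (j + Q - 1))
      + (Q - 1) ^ 2 * (N - 1) ^ 2 with hC0def
  set C1 : ℝ := Q * (Q + j - 1) * (2 * N * (Q - 1) + (Q - 2) * (j + Q) * (Q + j - 1) + 2 * j)
      with hC1def
  set C2 : ℝ := -(Q ^ 2 * (Q + j - 1) ^ 2 * (Q + j - 2)) with hC2def
  set K : ℝ := (Q - 1) * (N - 2) - j * (j + Q) with hKdef
  have hKpos : 0 < K := by rw [hKdef]; linarith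
  have hbr : 0 ≤ N * (Q - 1) + 1 - j * (j + Q - 1) := by nlinarith [key]
  have hone : (1 : ℝ) ≤ (Q - 1) * (N - 1) := by nlinarith
  have hC0pos : 0 < C0 := by
    rw [hC0def]
    nlinarith [mul_nonneg (mul_nonneg (mul_nonneg
      (show (0:ℝ) ≤ Q + j - 1 by linarith) (show (0:ℝ) ≤ Q - 1 by linarith))
      (show (0:ℝ) ≤ N - 1 by linarith)) hbr,
      mul_le_mul hone hone (by linarith) (by linarith)]
  have hC1nn : 0 ≤ C1 := by
    rw [hC1def]
    have h1 : (0:ℝ) ≤ 2 * N * (Q - 1) + (Q - 2) * (j + Q) * (Q + j - 1) + 2 * j := by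
      have := mul_nonneg (mul_nonneg (show (0:ℝ) ≤ Q - 2 by linarith)
        (show (0:ℝ) ≤ j + Q by linarith)) (show (0:ℝ) ≤ Q + j - 1 by linarith)
      nlinarith
    exact mul_nonneg (mul_nonneg (by linarith) (by linarith)) h1
  have hC2np : C2 ≤ 0 := by
    rw [hC2def]
    have h1 : (0:ℝ) ≤ Q ^ 2 * (Q + j - 1) ^ 2 * (Q + j - 2) :=
      mul_nonneg (mul_nonneg (sq_nonneg Q) (sq_nonneg (Q + j - 1))) (by linarith)
    linarith
  have hB1 : 0 < j ^ 3 + 2 * j ^ 2 + 2 * Q * j ^ 2 - 3 * j + 7 * Q * j + Q ^ 2 * j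
      + 5 * Q ^ 2 - 5 * Q := by
    nlinarith [mul_nonneg (mul_nonneg hj hj) hj,
      mul_nonneg (mul_nonneg hj hj) (show (0:ℝ) ≤ 2 + 2 * Q by linarith),
      mul_nonneg hj (show (0:ℝ) ≤ Q ^ 2 + 7 * Q - 3 by nlinarith)]
  have hB0 : 0 < 2 * j - 2 * j ^ 2 - 2 * j ^ 3 + 2 * j ^ 4 + 6 * Q - 14 * Q * j
      + 2 * Q * j ^ 2 + 6 * Q * j ^ 3 - 12 * Q ^ 2 + 10 * Q ^ 2 * j + 6 * Q ^ 2 * j ^ 2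
      + 6 * Q ^ 3 + 2 * Q ^ 3 * j := by
    nlinarith [mul_nonneg (mul_nonneg (mul_nonneg hj hj) hj) hj,
      mul_nonneg (mul_nonneg (mul_nonneg hj hj) hj) (show (0:ℝ) ≤ 6 * Q - 2 by linarith),
      mul_nonneg (mul_nonneg hj hj) (show (0:ℝ) ≤ 6 * Q ^ 2 + 2 * Q - 2 by nlinarith),
      mul_nonneg hj (show (0:ℝ) ≤ 2 * Q ^ 3 + 10 * Q ^ 2 - 14 * Q + 2 by nlinarith),
      mul_nonneg (show (0:ℝ) ≤ 6 * Q by linarith) (sq_nonneg (Q - 1))]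
  have hid : C0 + C1 + C2 = (Q + j) * K ^ 2
      + (j ^ 3 + 2 * j ^ 2 + 2 * Q * j ^ 2 - 3 * j + 7 * Q * j + Q ^ 2 * j
          + 5 * Q ^ 2 - 5 * Q) * K
      + (2 * j - 2 * j ^ 2 - 2 * j ^ 3 + 2 * j ^ 4 + 6 * Q - 14 * Q * j
          + 2 * Q * j ^ 2 + 6 * Q * j ^ 3 - 12 * Q ^ 2 + 10 * Q ^ 2 * j + 6 * Q ^ 2 * j ^ 2
          + 6 * Q ^ 3 + 2 * Q ^ 3 * j) := by
    rw [hC0def, hC1def, hC2def, hKdef]; ring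
  have hS : 0 < C0 + C1 + C2 := by
    rw [hid]
    nlinarith [mul_pos hB1 hKpos, mul_nonneg (show (0:ℝ) ≤ Q + j by linarith) (sq_nonneg K),
      hB0]
  have hfin : C0 + C1 * e + C2 * e ^ 2
      = (1 - e) * C0 + e * (C0 + C1 + C2) + (e * (1 - e)) * (-C2) := by ring
  rw [hfin]
  nlinarith [mul_pos he0 hS,
    mul_nonneg (mul_nonneg he0.le (show (0:ℝ) ≤ 1 - e by linarith)) (neg_nonneg.mpr hC2np),
    mul_nonneg (show (0:ℝ) ≤ 1 - e by linarith) hC0pos.le]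

set_option maxHeartbeats 1000000 in
/-- Positivity of the zeroth Krawtchouk coefficient `f₀` of the refining cubic for the
third Levenshtein bound: with the parameters of the refinement (integers `n ≥ q ≥ 2`,
positive integer `d` with integer `j := q(n-1-d)-(n-2)` satisfying `0 ≤ j < (S₁-q)/2`),
one has `a²(2-q-j) + Da + E > 0`, i.e.
`f₀ = 8(a²(2-q-j) + Da + E)/(q³n³) > 0`. -/
theorem stmt4 (n q : ℕ) (hq : 2 ≤ q) (hnq : q ≤ n) (d : ℕ) (hd : 1 ≤ d)
    (j : ℝ) (hj : j = (q : ℝ) * ((n : ℝ) - 1 - (d : ℝ)) - ((n : ℝ) - 2))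
    (hj0 : 0 ≤ j)
    (hjS : j < (Real.sqrt ((q : ℝ) ^ 2 + 4 * ((q : ℝ) - 1) * ((n : ℝ) - 2)) - (q : ℝ)) / 2)
    (d0 : ℝ) (hd0 : d0 = (n : ℝ) - j * ((n : ℝ) - 1) / ((q : ℝ) * (j + (q : ℝ) - 1)))
    (e : ℝ) (he0 : 0 < e) (he1 : e ≤ 1) (heint : ∃ k : ℤ, d0 + e = (k : ℝ))
    (a D E : ℝ)
    (ha : a = ((n : ℝ) - 1) * ((q : ℝ) - 1) * ((q : ℝ) + j) / ((q : ℝ) + j - 1) + e * (q : ℝ))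
    (hD : D = (j + (q : ℝ) - 1) * (2 * (n : ℝ) * ((q : ℝ) - 1) - (q : ℝ)) + (q : ℝ))
    (hE : E = -(n : ℝ) * ((n : ℝ) - 1) * ((q : ℝ) - 1) ^ 2 * (j + (q : ℝ))) :
    0 < a ^ 2 * (2 - (q : ℝ) - j) + D * a + E ∧
    0 < 8 * (a ^ 2 * (2 - (q : ℝ) - j) + D * a + E) / ((q : ℝ) ^ 3 * (n : ℝ) ^ 3) := by
  have hQ : (2 : ℝ) ≤ (q : ℝ) := by exact_mod_cast hq
  have hN : (q : ℝ) ≤ (n : ℝ) := by exact_mod_cast hnq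
  have hN2 : (2 : ℝ) ≤ (n : ℝ) := le_trans hQ hN
  -- key inequality from hjS
  have hX : (0 : ℝ) ≤ (q : ℝ) ^ 2 + 4 * ((q : ℝ) - 1) * ((n : ℝ) - 2) := by nlinarith
  have h1 : 2 * j + (q : ℝ)
      < Real.sqrt ((q : ℝ) ^ 2 + 4 * ((q : ℝ) - 1) * ((n : ℝ) - 2)) := by linarith
  have h2 : (2 * j + (q : ℝ)) ^ 2
      < (q : ℝ) ^ 2 + 4 * ((q : ℝ) - 1) * ((n : ℝ) - 2) := by
    nlinarith [Real.sq_sqrt hX,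
      Real.sqrt_nonneg ((q : ℝ) ^ 2 + 4 * ((q : ℝ) - 1) * ((n : ℝ) - 2)), h1]
  have key : j * (j + (q : ℝ)) < ((q : ℝ) - 1) * ((n : ℝ) - 2) := by nlinarith [h2]
  have hcpos : (0 : ℝ) < (q : ℝ) + j - 1 := by linarith
  have hcne : ((q : ℝ) + j - 1) ≠ 0 := ne_of_gt hcpos
  have hac : a * ((q : ℝ) + j - 1)
      = ((n : ℝ) - 1) * ((q : ℝ) - 1) * ((q : ℝ) + j)
        + e * (q : ℝ) * ((q : ℝ) + j - 1) := by
    rw [ha]; field_simp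
  have hM := stmt4_aux (n : ℝ) (q : ℝ) j e hQ hN hj0 key he0 he1
  have hMeq : (a ^ 2 * (2 - (q : ℝ) - j) + D * a + E) * ((q : ℝ) + j - 1) ^ 2
      = (((q : ℝ) + j - 1) * ((q : ℝ) - 1) * ((n : ℝ) - 1)
            * ((n : ℝ) * ((q : ℝ) - 1) + 1 - j * (j + (q : ℝ) - 1))
          + ((q : ℝ) - 1) ^ 2 * ((n : ℝ) - 1) ^ 2)
        + ((q : ℝ) * ((q : ℝ) + j - 1)
            * (2 * (n : ℝ) * ((q : ℝ) - 1) + ((q : ℝ) - 2) * (j + (q : ℝ))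
                * ((q : ℝ) + j - 1) + 2 * j)) * e
        + (-((q : ℝ) ^ 2 * ((q : ℝ) + j - 1) ^ 2 * ((q : ℝ) + j - 2))) * e ^ 2 := by
    have expand : (a ^ 2 * (2 - (q : ℝ) - j) + D * a + E) * ((q : ℝ) + j - 1) ^ 2
        = (a * ((q : ℝ) + j - 1)) ^ 2 * (2 - (q : ℝ) - j)
          + D * (a * ((q : ℝ) + j - 1)) * ((q : ℝ) + j - 1)
          + E * ((q : ℝ) + j - 1) ^ 2 := by ring
    rw [expand, hac, hD, hE]; ring
  have hPpos : 0 < a ^ 2 * (2 - (q : ℝ) - j) + D * a + E := by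
    have h3 : 0 < (a ^ 2 * (2 - (q : ℝ) - j) + D * a + E) * ((q : ℝ) + j - 1) ^ 2 := by
      rw [hMeq]; exact hM
    have hc2 : (0 : ℝ) < ((q : ℝ) + j - 1) ^ 2 := by positivity
    nlinarith [h3, hc2]
  refine ⟨hPpos, ?_⟩
  have hQ0 : (0 : ℝ) < (q : ℝ) := by linarith
  have hN0 : (0 : ℝ) < (n : ℝ) := by linarith
  exact div_pos (by linarith) (mul_pos (pow_pos hQ0 3) (pow_pos hN0 3))
end

section
/- Let n, q be integers with n ≥ q ≥ 2, let j be a real number with 0 ≤ j ≤ (S1−q)/2 where S1 = √(q² + 4(q−1)(n−2)), and let e ∈ (0,1]. Then the three multipliers μ_d = n(q−1)CD[C + q(j+q−1)] / (AB[B + q(j+q−1)]), μ' = e·n(q−1)E[C + q(j+q−1)]/(AB), and μ'' = (1−e)·n(q−1)CE / (A[B + q(j+q−1)]) are all nonnegative; in fact A, B, C, D, E are all positive. -/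
private lemma keyIneq (nr qr j : ℝ) (hq : 2 ≤ qr) (hnq : qr ≤ nr) (hj0 : 0 ≤ j)
    (hjS : j ≤ (Real.sqrt (qr ^ 2 + 4 * (qr - 1) * (nr - 2)) - qr) / 2) :
    j * (j + qr) ≤ (qr - 1) * (nr - 2) := by
  have hX : (0:ℝ) ≤ qr ^ 2 + 4 * (qr - 1) * (nr - 2) := by nlinarith
  have h1 : 2 * j + qr ≤ Real.sqrt (qr ^ 2 + 4 * (qr - 1) * (nr - 2)) := by linarith
  have h2 := Real.sq_sqrt hX
  nlinarith [Real.sqrt_nonneg (qr ^ 2 + 4 * (qr - 1) * (nr - 2))]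

private lemma auxB (nr qr j e : ℝ) (hq : 2 ≤ qr) (hnq : qr ≤ nr) (hj0 : 0 ≤ j)
    (he0 : 0 < e) :
    0 < (nr - 2 + j) * (qr - 1) + j * (j - 1) + e * qr * (j + qr - 1) := by
  nlinarith [mul_nonneg hj0 (by linarith : (0:ℝ) ≤ qr - 2),
    mul_nonneg (by linarith : (0:ℝ) ≤ nr - 2) (by linarith : (0:ℝ) ≤ qr - 1),
    mul_nonneg hj0 hj0, mul_pos (mul_pos he0 (by linarith : (0:ℝ) < qr))
      (by linarith : (0:ℝ) < j + qr - 1)]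

private lemma auxC (nr qr j e : ℝ) (hq : 2 ≤ qr) (hnq : qr ≤ nr) (hj0 : 0 ≤ j)
    (he0 : 0 < e) :
    0 < (nr - 1) * (qr - 1) * (j + qr) + e * qr * (j + qr - 1) := by
  nlinarith [mul_pos (mul_pos (by linarith : (0:ℝ) < nr - 1)
    (by linarith : (0:ℝ) < qr - 1)) (by linarith : (0:ℝ) < j + qr),
    mul_pos (mul_pos he0 (by linarith : (0:ℝ) < qr)) (by linarith : (0:ℝ) < j + qr - 1)]

private lemma auxE (nr qr j : ℝ) (hq : 2 ≤ qr) (hnq : qr ≤ nr) (hj0 : 0 ≤ j)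
    (hkey : j * (j + qr) ≤ (qr - 1) * (nr - 2)) :
    0 < (j + qr - 1) ^ 3 * ((nr - 1) * (qr - 2) + nr - j) := by
  have h2 : 0 < (nr - 1) * (qr - 2) + nr - j := by
    nlinarith [mul_nonneg hj0 hj0,
      mul_nonneg (by linarith : (0:ℝ) ≤ qr - 2) (by linarith : (0:ℝ) ≤ nr - 2)]
  have h1 : 0 < (j + qr - 1) ^ 3 := by
    have : (0:ℝ) < j + qr - 1 := by linarith
    positivity
  exact mul_pos h1 h2

private lemma auxD (nr qr j e : ℝ) (hq : 2 ≤ qr) (hnq : qr ≤ nr) (hj0 : 0 ≤ j)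
    (hkey : j * (j + qr) ≤ (qr - 1) * (nr - 2)) (he0 : 0 < e) (he1 : e ≤ 1) :
    0 < ((nr - 1) * (qr - 1) + (2 * e - 1) * (j + qr - 1) * qr / 2) ^ 2 +
      (j + qr - 1) ^ 2 * ((nr - 1) * (qr - 1) - qr ^ 2 / 4) := by
  have h2m : (j + qr - 1) * qr ≤ 2 * ((nr - 1) * (qr - 1)) := by
    nlinarith [mul_nonneg hj0 hj0]
  have htq : 0 < (j + qr - 1) * qr * e := by
    have : (0:ℝ) < j + qr - 1 := by linarith
    positivity
  have hD0 : 0 ≤ ((nr - 1) * (qr - 1)) * (((nr - 1) * (qr - 1)) + (j + qr - 1) * (j - 1)) := by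
    nlinarith [mul_nonneg hj0 (by linarith : (0:ℝ) ≤ qr + j - 2),
      mul_nonneg (by linarith : (0:ℝ) ≤ qr - 1) (by linarith : (0:ℝ) ≤ qr - 2),
      mul_nonneg (by linarith : (0:ℝ) ≤ nr - qr) (by linarith : (0:ℝ) ≤ qr - 1)]
  nlinarith [mul_pos htq (by nlinarith :
    (0:ℝ) < (j + qr - 1) * qr * e + 2 * ((nr - 1) * (qr - 1)) - (j + qr - 1) * qr)]

private lemma auxA (nr qr j e : ℝ) (hq : 2 ≤ qr) (hnq : qr ≤ nr) (hj0 : 0 ≤ j)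
    (hkey : j * (j + qr) ≤ (qr - 1) * (nr - 2)) (he0 : 0 < e) (he1 : e ≤ 1) :
    0 < -(qr + j - 2) * (e * qr * (j + qr - 1)) ^ 2 +
      (nr - 1) * (qr - 1) * (j + qr) * (nr * (qr - 1) - j * (qr + j - 2)) +
      e * qr * (j + qr - 1) *
        ((qr ^ 2 + j * qr - qr - 2 * j) * (qr + j - 2) + 2 * nr * (qr - 1)) := by
  have hK : 0 < nr * (qr - 1) - j * (qr + j - 2) := by nlinarith
  have hs : 0 < e * qr * (j + qr - 1) := by
    have : (0:ℝ) < j + qr - 1 := by linarith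
    positivity
  have hsT : e * qr * (j + qr - 1) ≤ qr * (j + qr - 1) := by
    nlinarith [mul_pos (by linarith : (0:ℝ) < qr) (by linarith : (0:ℝ) < j + qr - 1)]
  have hP : 0 < (nr - 1) * (qr - 1) * (j + qr) * (nr * (qr - 1) - j * (qr + j - 2)) := by
    apply mul_pos _ hK
    have : (0:ℝ) < nr - 1 := by linarith
    have : (0:ℝ) < qr - 1 := by linarith
    have : (0:ℝ) < j + qr := by linarith
    positivity
  nlinarith [mul_nonneg (mul_nonneg (by linarith : (0:ℝ) ≤ qr + j - 2) hs.le)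
      (by linarith : (0:ℝ) ≤ qr * (j + qr - 1) - e * qr * (j + qr - 1)),
    mul_pos hs hK]



/-- Nonnegativity of the KKT multipliers of the refined third Levenshtein bound:
for integers `n ≥ q ≥ 2`, `j ∈ [0,(S₁−q)/2]` and `e ∈ (0,1]`, the quantities
`A, B, C, D, E` are all positive and the multipliers `μ_d, μ', μ''` are all nonnegative. -/
theorem stmt11 (n q : ℕ) (hq : 2 ≤ q) (hnq : q ≤ n)
    (j : ℝ) (hj0 : 0 ≤ j)
    (hjS : j ≤ (Real.sqrt ((q : ℝ) ^ 2 + 4 * ((q : ℝ) - 1) * ((n : ℝ) - 2)) - (q : ℝ)) / 2)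
    (e : ℝ) (he0 : 0 < e) (he1 : e ≤ 1)
    (A B C D E : ℝ)
    (hA : A = -((q : ℝ) + j - 2) * (e * (q : ℝ) * (j + (q : ℝ) - 1)) ^ 2 +
      ((n : ℝ) - 1) * ((q : ℝ) - 1) * (j + (q : ℝ)) *
        ((n : ℝ) * ((q : ℝ) - 1) - j * ((q : ℝ) + j - 2)) +
      e * (q : ℝ) * (j + (q : ℝ) - 1) *
        (((q : ℝ) ^ 2 + j * (q : ℝ) - (q : ℝ) - 2 * j) * ((q : ℝ) + j - 2) +
          2 * (n : ℝ) * ((q : ℝ) - 1)))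
    (hB : B = ((n : ℝ) - 2 + j) * ((q : ℝ) - 1) + j * (j - 1) + e * (q : ℝ) * (j + (q : ℝ) - 1))
    (hC : C = ((n : ℝ) - 1) * ((q : ℝ) - 1) * (j + (q : ℝ)) + e * (q : ℝ) * (j + (q : ℝ) - 1))
    (hD : D = (((n : ℝ) - 1) * ((q : ℝ) - 1) +
        (2 * e - 1) * (j + (q : ℝ) - 1) * (q : ℝ) / 2) ^ 2 +
      (j + (q : ℝ) - 1) ^ 2 * (((n : ℝ) - 1) * ((q : ℝ) - 1) - (q : ℝ) ^ 2 / 4))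
    (hE : E = (j + (q : ℝ) - 1) ^ 3 * (((n : ℝ) - 1) * ((q : ℝ) - 2) + (n : ℝ) - j))
    (μd μ' μ'' : ℝ)
    (hμd : μd = (n : ℝ) * ((q : ℝ) - 1) * C * D * (C + (q : ℝ) * (j + (q : ℝ) - 1)) /
      (A * B * (B + (q : ℝ) * (j + (q : ℝ) - 1))))
    (hμ' : μ' = e * (n : ℝ) * ((q : ℝ) - 1) * E * (C + (q : ℝ) * (j + (q : ℝ) - 1)) / (A * B))
    (hμ'' : μ'' = (1 - e) * (n : ℝ) * ((q : ℝ) - 1) * C * E /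
      (A * (B + (q : ℝ) * (j + (q : ℝ) - 1)))) :
    (0 < A ∧ 0 < B ∧ 0 < C ∧ 0 < D ∧ 0 < E) ∧ (0 ≤ μd ∧ 0 ≤ μ' ∧ 0 ≤ μ'') := by
  have hq' : (2:ℝ) ≤ (q:ℝ) := by exact_mod_cast hq
  have hnq' : (q:ℝ) ≤ (n:ℝ) := by exact_mod_cast hnq
  have hkey := keyIneq (n:ℝ) (q:ℝ) j hq' hnq' hj0 hjS
  have hApos : 0 < A := hA ▸ auxA (n:ℝ) (q:ℝ) j e hq' hnq' hj0 hkey he0 he1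
  have hBpos : 0 < B := hB ▸ auxB (n:ℝ) (q:ℝ) j e hq' hnq' hj0 he0
  have hCpos : 0 < C := hC ▸ auxC (n:ℝ) (q:ℝ) j e hq' hnq' hj0 he0
  have hDpos : 0 < D := hD ▸ auxD (n:ℝ) (q:ℝ) j e hq' hnq' hj0 hkey he0 he1
  have hEpos : 0 < E := hE ▸ auxE (n:ℝ) (q:ℝ) j hq' hnq' hj0 hkey
  have hq0 : (0:ℝ) < (q:ℝ) := by linarith
  have ht0 : (0:ℝ) < j + (q:ℝ) - 1 := by linarith
  have hqt : 0 < (q:ℝ) * (j + (q:ℝ) - 1) := mul_pos hq0 ht0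
  have hn0 : (0:ℝ) < (n:ℝ) := by linarith
  have hq1 : (0:ℝ) < (q:ℝ) - 1 := by linarith
  have hBqt : 0 < B + (q:ℝ) * (j + (q:ℝ) - 1) := by linarith
  have hCqt : 0 < C + (q:ℝ) * (j + (q:ℝ) - 1) := by linarith
  have he1' : (0:ℝ) ≤ 1 - e := by linarith
  refine ⟨⟨hApos, hBpos, hCpos, hDpos, hEpos⟩, ?_, ?_, ?_⟩
  · rw [hμd]
    exact div_nonneg
      (mul_pos (mul_pos (mul_pos (mul_pos hn0 hq1) hCpos) hDpos) hCqt).le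
      (mul_pos (mul_pos hApos hBpos) hBqt).le
  · rw [hμ']
    exact div_nonneg
      (mul_pos (mul_pos (mul_pos (mul_pos he0 hn0) hq1) hEpos) hCqt).le
      (mul_pos hApos hBpos).le
  · rw [hμ'']
    exact div_nonneg
      (mul_nonneg (mul_nonneg (mul_nonneg (mul_nonneg he1' hn0.le) hq1.le) hCpos.le) hEpos.le)
      (mul_pos hApos hBqt).le
end

section
/- Let n, q be integers with n ≥ q ≥ 2, set S1 = √(q² + 4(q−1)(n−2)), and let j be a real number with 0 ≤ j ≤ (S1−q)/2. Then n(q−1) − j(q+j−2) ≥ (q−2) + S1 > 0. -/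
/-- For integers `n ≥ q ≥ 2` and real `j` with `0 ≤ j ≤ (S₁−q)/2`, where
`S₁ = √(q² + 4(q−1)(n−2))`, one has `n(q−1) − j(q+j−2) ≥ (q−2) + S₁ > 0`. -/
theorem stmt12 (n q : ℕ) (hq : 2 ≤ q) (hnq : q ≤ n)
    (j : ℝ) (hj0 : 0 ≤ j)
    (hjS : j ≤ (Real.sqrt ((q : ℝ) ^ 2 + 4 * ((q : ℝ) - 1) * ((n : ℝ) - 2)) - (q : ℝ)) / 2) :
    (n : ℝ) * ((q : ℝ) - 1) - j * ((q : ℝ) + j - 2) ≥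
      ((q : ℝ) - 2) + Real.sqrt ((q : ℝ) ^ 2 + 4 * ((q : ℝ) - 1) * ((n : ℝ) - 2)) ∧
    0 < ((q : ℝ) - 2) + Real.sqrt ((q : ℝ) ^ 2 + 4 * ((q : ℝ) - 1) * ((n : ℝ) - 2)) := by
  have hq' : (2 : ℝ) ≤ (q : ℝ) := by exact_mod_cast hq
  have hn' : (q : ℝ) ≤ (n : ℝ) := by exact_mod_cast hnq
  set S := Real.sqrt ((q : ℝ) ^ 2 + 4 * ((q : ℝ) - 1) * ((n : ℝ) - 2)) with hSdef
  have harg : (0 : ℝ) ≤ (q : ℝ) ^ 2 + 4 * ((q : ℝ) - 1) * ((n : ℝ) - 2) := by nlinarith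
  have hS2 : S ^ 2 = (q : ℝ) ^ 2 + 4 * ((q : ℝ) - 1) * ((n : ℝ) - 2) := Real.sq_sqrt harg
  have hS0 : 0 ≤ S := Real.sqrt_nonneg _
  have hSq : (q : ℝ) ≤ S := by
    have := Real.sqrt_le_sqrt (show (q : ℝ) ^ 2 ≤ (q : ℝ) ^ 2 + 4 * ((q : ℝ) - 1) * ((n : ℝ) - 2) by nlinarith)
    rwa [Real.sqrt_sq (by linarith)] at this
  constructor
  · nlinarith [mul_nonneg (show (0:ℝ) ≤ (S - q) / 2 - j by linarith)
      (show (0:ℝ) ≤ (S - q) / 2 + j + (q : ℝ) - 2 by linarith)]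
  · linarith
end

section
/- Every code C of length 11 over an alphabet of size 4 (i.e., C ⊆ Q^{11} with |Q| = 4) whose minimum Hamming distance is at least 7 satisfies |C| ≤ 320. -/
abbrev G2 := ZMod 2 × ZMod 2

def bchi (g u : G2) : Bool := decide (g.1 * u.1 + g.2 * u.2 = 0)

noncomputable def chi (g u : G2) : ℚ := if bchi g u then 1 else -1

lemma bchi_add (g u v : G2) : bchi g (u + v) = (bchi g u == bchi g v) := by revert g u v; decide

lemma chi_add (g u v : G2) : chi g (u + v) = chi g u * chi g v := by
  unfold chi
  rw [bchi_add]
  cases bchi g u <;> cases bchi g v <;> norm_num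

lemma chi_zero (g : G2) : chi g 0 = 1 := by
  unfold chi
  rw [show bchi g 0 = true from by revert g; decide]
  simp

def Gp : Finset G2 := {(0,1),(1,0),(1,1)}

lemma chi_true {g u : G2} (h : bchi g u = true) : chi g u = 1 := by simp [chi, h]
lemma chi_false {g u : G2} (h : bchi g u = false) : chi g u = -1 := by simp [chi, h]

lemma sum_chi (u : G2) : ∑ g ∈ Gp, chi g u = if u = 0 then 3 else -1 := by
  have hsum : ∑ g ∈ Gp, chi g u = chi (0,1) u + (chi (1,0) u + chi (1,1) u) := by
    rw [show Gp = insert ((0:ZMod 2),(1:ZMod 2)) {(1,0),(1,1)} from rfl,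
      Finset.sum_insert (by decide), Finset.sum_insert (by decide), Finset.sum_singleton]
  fin_cases u
  · rw [hsum, chi_true (by decide), chi_true (by decide), chi_true (by decide),
      if_pos (by decide)]
    norm_num
  · rw [hsum, chi_false (by decide), chi_true (by decide), chi_false (by decide),
      if_neg (by decide)]
    norm_num
  · rw [hsum, chi_true (by decide), chi_false (by decide), chi_false (by decide),
      if_neg (by decide)]
    norm_num
  · rw [hsum, chi_false (by decide), chi_false (by decide), chi_true (by decide),
      if_neg (by decide)]
    norm_num

lemma add_eq_zero_iff_g2 (u v : G2) : u + v = 0 ↔ u = v := by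
  revert u v; decide

/-- Krawtchouk coefficients of the LP polynomial. -/
noncomputable def cf : ℕ → ℚ
  | 0 => 1
  | 1 => 13/21
  | 2 => 11/63
  | 3 => 1/21
  | _ => 0

lemma cf_ge4 (n : ℕ) : cf (n + 4) = 0 := rfl

lemma cf_nonneg (n : ℕ) : 0 ≤ cf n := by
  match n with
  | 0 => norm_num [cf]
  | 1 => norm_num [cf]
  | 2 => norm_num [cf]
  | 3 => norm_num [cf]
  | (n+4) => exact le_of_eq (cf_ge4 n).symm

noncomputable def Hsum {ι : Type*} [DecidableEq ι] (κ : ι → ℚ) (j : ℕ) (s : Finset ι) : ℚ :=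
  ∑ S ∈ s.powerset, cf (S.card + j) * ∏ i ∈ S, κ i

lemma Hsum_insert {ι : Type*} [DecidableEq ι] (κ : ι → ℚ) (j : ℕ) {a : ι} {s : Finset ι}
    (ha : a ∉ s) :
    Hsum κ j (insert a s) = Hsum κ j s + κ a * Hsum κ (j+1) s := by
  unfold Hsum
  rw [Finset.sum_powerset_insert ha, Finset.mul_sum]
  congr 1
  refine Finset.sum_congr rfl fun t ht => ?_
  have hat : a ∉ t := fun h => ha (Finset.mem_powerset.mp ht h)
  rw [Finset.card_insert_of_notMem hat, Finset.prod_insert hat,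
    show t.card + 1 + j = t.card + (j+1) from by omega]
  ring

lemma Hsum_four {ι : Type*} [DecidableEq ι] (κ : ι → ℚ) (s : Finset ι) :
    Hsum κ 4 s = 0 :=
  Finset.sum_eq_zero fun S _ => by rw [cf_ge4, zero_mul]

noncomputable def e1q (A B : ℚ) : ℚ := 3*A - B
noncomputable def e2q (A B : ℚ) : ℚ := 9*(A*(A-1)/2) - 3*A*B + B*(B-1)/2
noncomputable def e3q (A B : ℚ) : ℚ :=
  27*(A*(A-1)*(A-2)/6) - 9*(A*(A-1)/2)*B + 3*A*(B*(B-1)/2) - B*(B-1)*(B-2)/6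
noncomputable def g0q (A B : ℚ) : ℚ := 1 + 13/21*e1q A B + 11/63*e2q A B + 1/21*e3q A B
noncomputable def g1q (A B : ℚ) : ℚ := 13/21 + 11/63*e1q A B + 1/21*e2q A B
noncomputable def g2q (A B : ℚ) : ℚ := 11/63 + 1/21*e1q A B

lemma Hsum_eval {ι : Type*} [DecidableEq ι] (κ : ι → ℚ) (hκ : ∀ i, κ i = 3 ∨ κ i = -1)
    (s : Finset ι) :
    Hsum κ 3 s = 1/21 ∧
    Hsum κ 2 s = g2q ((s.filter fun i => κ i = 3).card) ((s.filter fun i => κ i = -1).card) ∧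
    Hsum κ 1 s = g1q ((s.filter fun i => κ i = 3).card) ((s.filter fun i => κ i = -1).card) ∧
    Hsum κ 0 s = g0q ((s.filter fun i => κ i = 3).card) ((s.filter fun i => κ i = -1).card) := by
  induction s using Finset.induction_on with
  | empty =>
    refine ⟨?_, ?_, ?_, ?_⟩ <;>
      · simp [Hsum, g0q, g1q, g2q, e1q, e2q, e3q, cf]
  | @insert a s ha IH =>
    obtain ⟨IH3, IH2, IH1, IH0⟩ := IH
    have h3 := Hsum_insert κ 3 ha
    have h2 := Hsum_insert κ 2 ha
    have h1 := Hsum_insert κ 1 ha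
    have h0 := Hsum_insert κ 0 ha
    rw [Hsum_four] at h3
    rcases hκ a with h | h
    · have hf1 : (insert a s).filter (fun i => κ i = 3) =
        insert a (s.filter fun i => κ i = 3) := by
        rw [Finset.filter_insert, if_pos h]
      have hf2 : (insert a s).filter (fun i => κ i = -1) =
        s.filter fun i => κ i = -1 := by
        rw [Finset.filter_insert, if_neg (by rw [h]; norm_num)]
      have hna : a ∉ s.filter fun i => κ i = 3 := fun hm => ha (Finset.mem_filter.mp hm).1
      rw [hf1, hf2, Finset.card_insert_of_notMem hna]
      set A := ((s.filter fun i => κ i = 3).card : ℚ)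
      set B := ((s.filter fun i => κ i = -1).card : ℚ)
      refine ⟨by rw [h3, IH3]; ring, ?_, ?_, ?_⟩
      · rw [h2, IH2, IH3, h]
        push_cast
        simp only [g2q, e1q]
        ring
      · rw [h1, IH1, IH2, h]
        push_cast
        simp only [g1q, g2q, e1q, e2q]
        ring
      · rw [h0, IH0, IH1, h]
        push_cast
        simp only [g0q, g1q, e1q, e2q, e3q]
        ring
    · have hf1 : (insert a s).filter (fun i => κ i = 3) = s.filter fun i => κ i = 3 := by
        rw [Finset.filter_insert, if_neg (by rw [h]; norm_num)]
      have hf2 : (insert a s).filter (fun i => κ i = -1) =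
        insert a (s.filter fun i => κ i = -1) := by
        rw [Finset.filter_insert, if_pos h]
      have hna : a ∉ s.filter fun i => κ i = -1 := fun hm => ha (Finset.mem_filter.mp hm).1
      rw [hf1, hf2, Finset.card_insert_of_notMem hna]
      set A := ((s.filter fun i => κ i = 3).card : ℚ)
      set B := ((s.filter fun i => κ i = -1).card : ℚ)
      refine ⟨by rw [h3, IH3]; ring, ?_, ?_, ?_⟩
      · rw [h2, IH2, IH3, h]
        push_cast
        simp only [g2q, e1q]
        ring
      · rw [h1, IH1, IH2, h]
        push_cast
        simp only [g1q, g2q, e1q, e2q]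
        ring
      · rw [h0, IH0, IH1, h]
        push_cast
        simp only [g0q, g1q, e1q, e2q, e3q]
        ring

lemma posS {Q : Type*} [DecidableEq Q] (e : Q ≃ G2) (C : Finset (Fin 11 → Q))
    (S : Finset (Fin 11)) :
    0 ≤ ∑ x ∈ C, ∑ y ∈ C, ∏ i ∈ S, (if x i = y i then (3:ℚ) else -1) := by
  have hk : ∀ x y : Fin 11 → Q,
      (∏ i ∈ S, (if x i = y i then (3:ℚ) else -1)) =
      ∑ p ∈ S.pi (fun _ => Gp),
        (∏ i ∈ S.attach, chi (p i.1 i.2) (e (x i.1))) *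
        (∏ i ∈ S.attach, chi (p i.1 i.2) (e (y i.1))) := by
    intro x y
    have h1 : ∀ i : Fin 11, (if x i = y i then (3:ℚ) else -1) =
        ∑ g ∈ Gp, chi g (e (x i)) * chi g (e (y i)) := by
      intro i
      rw [Finset.sum_congr rfl (fun g _ => (chi_add g (e (x i)) (e (y i))).symm), sum_chi]
      by_cases h : x i = y i
      · rw [if_pos ((add_eq_zero_iff_g2 _ _).mpr (by rw [h])), if_pos h]
      · rw [if_neg (fun hc => h (e.injective ((add_eq_zero_iff_g2 _ _).mp hc))), if_neg h]
    rw [Finset.prod_congr rfl fun i _ => h1 i, Finset.prod_sum]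
    exact Finset.sum_congr rfl fun p _ => by rw [Finset.prod_mul_distrib]
  have key : (∑ x ∈ C, ∑ y ∈ C, ∏ i ∈ S, (if x i = y i then (3:ℚ) else -1)) =
      ∑ p ∈ S.pi (fun _ => Gp),
        (∑ x ∈ C, ∏ i ∈ S.attach, chi (p i.1 i.2) (e (x i.1))) *
        (∑ y ∈ C, ∏ i ∈ S.attach, chi (p i.1 i.2) (e (y i.1))) := by
    rw [Finset.sum_congr rfl fun x _ => Finset.sum_congr rfl fun y _ => hk x y]
    rw [Finset.sum_congr rfl fun x _ => Finset.sum_comm]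
    rw [Finset.sum_comm]
    exact Finset.sum_congr rfl fun p _ => (Finset.sum_mul_sum _ _ _ _).symm
  rw [key]
  exact Finset.sum_nonneg fun p _ => mul_self_nonneg _

/-- `A₄(11, −3/11) ≤ 320`: every quaternary code of length 11 with minimum Hamming
distance at least 7 has at most 320 codewords. -/
theorem stmt16 (Q : Type*) [Fintype Q] [DecidableEq Q] (hQ : Fintype.card Q = 4)
    (C : Finset (Fin 11 → Q))
    (hC : ∀ x ∈ C, ∀ y ∈ C, x ≠ y → 7 ≤ hammingDist x y) :
    C.card ≤ 320 := by
  have e : Q ≃ G2 := Fintype.equivOfCardEq (by rw [hQ]; rfl)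
  set T : (Fin 11 → Q) → (Fin 11 → Q) → ℚ :=
    fun x y => Hsum (fun i => if x i = y i then (3:ℚ) else -1) 0 Finset.univ with hT
  have hκvals : ∀ x y : Fin 11 → Q, ∀ i,
      (if x i = y i then (3:ℚ) else -1) = 3 ∨ (if x i = y i then (3:ℚ) else -1) = -1 := by
    intro x y i; by_cases h : x i = y i <;> simp [h]
  have eval : ∀ x y : Fin 11 → Q, T x y =
      g0q ((Finset.univ.filter fun i => (if x i = y i then (3:ℚ) else -1) = 3).card)
          ((Finset.univ.filter fun i => (if x i = y i then (3:ℚ) else -1) = -1).card) :=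
    fun x y => (Hsum_eval _ (hκvals x y) Finset.univ).2.2.2
  -- diagonal value
  have diag : ∀ x : Fin 11 → Q, T x x = 320 := by
    intro x
    rw [eval x x]
    have hf1 : (Finset.univ.filter fun i : Fin 11 =>
        (if x i = x i then (3:ℚ) else -1) = 3) = Finset.univ :=
      Finset.filter_true_of_mem fun i _ => by simp
    have hf2 : (Finset.univ.filter fun i : Fin 11 =>
        (if x i = x i then (3:ℚ) else -1) = -1) = ∅ :=
      Finset.filter_false_of_mem fun i _ => by norm_num
    rw [hf1, hf2]
    norm_num [g0q, e1q, e2q, e3q]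
  -- off-diagonal values
  have off : ∀ x ∈ C, ∀ y ∈ C, x ≠ y → T x y ≤ 0 := by
    intro x hx y hy hxy
    have hd := hC x hx y hy hxy
    rw [eval x y]
    set a := (Finset.univ.filter fun i => (if x i = y i then (3:ℚ) else -1) = 3).card with ha
    set b := (Finset.univ.filter fun i => (if x i = y i then (3:ℚ) else -1) = -1).card with hb
    have hbham : b = hammingDist x y := by
      rw [hb, hammingDist]
      apply congrArg
      apply Finset.filter_congr
      intro i _
      by_cases h : x i = y i <;> norm_num [h]
    have hab : a + b = 11 := by
      rw [ha, hb]
      have : (Finset.univ.filter fun i => (if x i = y i then (3:ℚ) else -1) = -1) =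
          (Finset.univ.filter fun i : Fin 11 =>
            ¬ ((if x i = y i then (3:ℚ) else -1) = 3)) := by
        apply Finset.filter_congr
        intro i _
        by_cases h : x i = y i <;> norm_num [h]
      rw [this, Finset.card_filter_add_card_filter_not, Finset.card_univ]
      simp
    have hb7 : 7 ≤ b := hbham ▸ hd
    have hb11 : b ≤ 11 := by omega
    interval_cases b
    · have : a = 4 := by omega
      rw [this]; norm_num [g0q, e1q, e2q, e3q]
    · have : a = 3 := by omega
      rw [this]; norm_num [g0q, e1q, e2q, e3q]
    · have : a = 2 := by omega
      rw [this]; norm_num [g0q, e1q, e2q, e3q]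
    · have : a = 1 := by omega
      rw [this]; norm_num [g0q, e1q, e2q, e3q]
    · have : a = 0 := by omega
      rw [this]; norm_num [g0q, e1q, e2q, e3q]
  -- total sum bounds
  have lower : (C.card : ℚ) * C.card ≤ ∑ x ∈ C, ∑ y ∈ C, T x y := by
    have expand : (∑ x ∈ C, ∑ y ∈ C, T x y) =
        ∑ S ∈ (Finset.univ : Finset (Fin 11)).powerset, cf S.card *
          (∑ x ∈ C, ∑ y ∈ C, ∏ i ∈ S, (if x i = y i then (3:ℚ) else -1)) := by
      simp only [hT, Hsum, Nat.add_zero]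
      rw [Finset.sum_congr rfl fun x _ => Finset.sum_comm]
      rw [Finset.sum_comm]
      refine Finset.sum_congr rfl fun S _ => ?_
      rw [Finset.mul_sum]
      exact Finset.sum_congr rfl fun x _ => by rw [Finset.mul_sum]
    rw [expand]
    have h0 : cf (∅ : Finset (Fin 11)).card *
        (∑ x ∈ C, ∑ y ∈ C, ∏ i ∈ (∅ : Finset (Fin 11)), (if x i = y i then (3:ℚ) else -1))
        = (C.card : ℚ) * C.card := by
      simp [cf]
    rw [← h0]
    apply Finset.single_le_sum
      (f := fun S => cf S.card *
        (∑ x ∈ C, ∑ y ∈ C, ∏ i ∈ S, (if x i = y i then (3:ℚ) else -1)))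
    · exact fun S _ => mul_nonneg (cf_nonneg _) (posS e C S)
    · exact Finset.empty_mem_powerset _
  have upper : (∑ x ∈ C, ∑ y ∈ C, T x y) ≤ 320 * C.card := by
    have step : ∀ x ∈ C, (∑ y ∈ C, T x y) ≤ 320 := by
      intro x hx
      rw [← Finset.add_sum_erase C (T x) hx]
      have : (∑ y ∈ C.erase x, T x y) ≤ 0 :=
        Finset.sum_nonpos fun y hy =>
          off x hx y (Finset.mem_of_mem_erase hy)
            (Ne.symm (Finset.ne_of_mem_erase hy))
      rw [diag x]
      linarith
    calc (∑ x ∈ C, ∑ y ∈ C, T x y) ≤ ∑ x ∈ C, (320:ℚ) := Finset.sum_le_sum step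
      _ = 320 * C.card := by rw [Finset.sum_const, nsmul_eq_mul]; ring
  rcases Nat.eq_zero_or_pos C.card with h | h
  · omega
  · have hc : (0:ℚ) < C.card := by exact_mod_cast h
    have : (C.card : ℚ) ≤ 320 := by nlinarith [le_trans lower upper]
    exact_mod_cast this
end

section
/- Every code C of length 14 over an alphabet of size 3 (i.e., C ⊆ Q^{14} with |Q| = 3) whose minimum Hamming distance is at least 8 satisfies |C| ≤ 237. -/
/-!
Delsarte's linear programming bound, with positive semidefinite kernels in place of
Krawtchouk polynomials. Sending the letters of `Q` to the vertices of a regular simplex gives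
the PSD Gram kernel `g a b = q [a = b] - 1` (here `q = 3`). On words of length 14 the kernels
`S = ∑ᵢ gᵢ = 28 - 3d`, `E = ∑_{i ≠ j} gᵢ gⱼ = S² - S - 28` and, by the Schur product theorem,
`S ⊙ E` are PSD, where `d` is the Hamming distance. Hence `f = 1 + (26 S + 10 E + S E) / 120`
has `∑_{x,y ∈ C} f x y ≥ |C|²`. But `120 f = (S - 4)(S + 5)(S + 8)` is `≤ 0` for every integer
`8 ≤ d ≤ 14`, and `f = 1188/5` at `d = 0`, so `|C|² ≤ |C| · 1188/5`.
-/

open Finset Matrix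

namespace Matrix.PosSemidef

variable {X : Type*} [Fintype X] {M : Matrix X X ℝ}

theorem sum_sum_nonneg (hM : M.PosSemidef) (C : Finset X) :
    0 ≤ ∑ x ∈ C, ∑ y ∈ C, M x y := by
  classical
  simpa [dotProduct, mulVec, Finset.mul_sum, Finset.sum_ite_mem, ite_mul, mul_ite]
    using hM.dotProduct_mulVec_nonneg (fun x => if x ∈ C then 1 else 0)

theorem card_le_of_diag_le_of_offDiag_nonpos (hM : M.PosSemidef) (C : Finset X) {t : ℝ}
    (ht : 0 ≤ t) (hdiag : ∀ x ∈ C, 1 + M x x ≤ t)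
    (hoff : ∀ x ∈ C, ∀ y ∈ C, x ≠ y → 1 + M x y ≤ 0) :
    (#C : ℝ) ≤ t := by
  classical
  have hrow : ∀ x ∈ C, ∑ y ∈ C, (1 + M x y) ≤ t := fun x hx => by
    rw [← add_sum_erase C _ hx]
    have : ∑ y ∈ C.erase x, (1 + M x y) ≤ 0 := sum_nonpos fun y hy =>
      hoff x hx y (mem_of_mem_erase hy) (ne_of_mem_erase hy).symm
    linarith [hdiag x hx]
  have key : (#C : ℝ) * #C ≤ #C * t := calc
    (#C : ℝ) * #C ≤ #C * #C + ∑ x ∈ C, ∑ y ∈ C, M x y :=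
        le_add_of_nonneg_right (hM.sum_sum_nonneg C)
    _ = ∑ x ∈ C, ∑ y ∈ C, (1 + M x y) := by simp [sum_add_distrib]
    _ ≤ ∑ x ∈ C, t := sum_le_sum hrow
    _ = #C * t := by simp
  rcases (Nat.cast_nonneg (α := ℝ) #C).eq_or_lt with h | h
  · linarith
  · exact le_of_mul_le_mul_left key h

end Matrix.PosSemidef

section Gram

variable (Q : Type*) [Fintype Q] [DecidableEq Q]

def simplexGram : Matrix Q Q ℝ :=
  of fun a b => if a = b then (Fintype.card Q : ℝ) - 1 else -1

theorem posSemidef_simplexGram : (simplexGram Q).PosSemidef := by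
  refine .of_dotProduct_mulVec_nonneg ?_ fun v => ?_
  · ext a b; simp [simplexGram, eq_comm]
  · have hrow : ∀ a, (simplexGram Q *ᵥ v) a = Fintype.card Q * v a - ∑ b, v b := fun a =>
      calc
        _ = ∑ b, ((Fintype.card Q : ℝ) * (if a = b then v b else 0) - v b) :=
          sum_congr rfl fun b _ => by by_cases h : a = b <;> simp [simplexGram, h]; ring
        _ = _ := by rw [sum_sub_distrib, ← mul_sum, sum_ite_eq]; simp
    have hform : star v ⬝ᵥ (simplexGram Q *ᵥ v) =
        Fintype.card Q * ∑ a, v a ^ 2 - (∑ a, v a) ^ 2 := by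
      simp only [dotProduct, hrow, star_trivial]
      rw [sq, mul_sum, sum_mul, ← sum_sub_distrib]
      exact sum_congr rfl fun _ _ => by ring
    rw [hform, sub_nonneg]
    exact sq_sum_le_card_mul_sum_sq

variable {Q}

theorem simplexGram_sq (a b : Q) :
    simplexGram Q a b ^ 2 = (Fintype.card Q - 2) * simplexGram Q a b + (Fintype.card Q - 1) := by
  simp only [simplexGram, of_apply]
  split_ifs <;> ring

variable {ι : Type*}

def coordGram (i : ι) : Matrix (ι → Q) (ι → Q) ℝ :=
  (simplexGram Q).submatrix (· i) (· i)

theorem posSemidef_coordGram (i : ι) : (coordGram i : Matrix (ι → Q) _ ℝ).PosSemidef :=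
  (posSemidef_simplexGram Q).submatrix _

variable [Fintype ι]

def wordGram : Matrix (ι → Q) (ι → Q) ℝ :=
  ∑ i, coordGram i

def pairGram : Matrix (ι → Q) (ι → Q) ℝ :=
  ∑ p ∈ (univ : Finset ι).offDiag, coordGram p.1 ⊙ coordGram p.2

theorem posSemidef_wordGram : (wordGram : Matrix (ι → Q) _ ℝ).PosSemidef :=
  posSemidef_sum _ fun i _ => posSemidef_coordGram i

theorem posSemidef_pairGram : (pairGram : Matrix (ι → Q) _ ℝ).PosSemidef :=
  posSemidef_sum _ fun p _ => (posSemidef_coordGram p.1).hadamard (posSemidef_coordGram p.2)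

theorem wordGram_apply (x y : ι → Q) :
    wordGram x y = (Fintype.card Q - 1) * Fintype.card ι - Fintype.card Q * hammingDist x y := by
  have hcoord : ∀ i, coordGram i x y =
      (Fintype.card Q - 1) - Fintype.card Q * (if x i ≠ y i then 1 else 0 : ℝ) := fun i => by
    by_cases h : x i = y i <;> simp [coordGram, simplexGram, h]
  simp only [wordGram, Matrix.sum_apply, hcoord, sum_sub_distrib, ← mul_sum, sum_boole]
  simp [hammingDist]
  ring

theorem pairGram_apply [DecidableEq ι] (x y : ι → Q) :
    pairGram x y = wordGram x y ^ 2 - (Fintype.card Q - 2) * wordGram x y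
      - (Fintype.card Q - 1) * Fintype.card ι := by
  have hsq : wordGram x y ^ 2 = ∑ i, coordGram i x y ^ 2 + pairGram x y := by
    rw [wordGram, Matrix.sum_apply, sq, sum_mul_sum, ← sum_product', ← diag_union_offDiag,
      sum_union (disjoint_diag_offDiag _), sum_diag]
    simp [pairGram, Matrix.sum_apply, sq]
  have hdiag : ∑ i, coordGram i x y ^ 2
      = (Fintype.card Q - 2) * wordGram x y + (Fintype.card Q - 1) * Fintype.card ι := by
    simp only [coordGram, submatrix_apply, simplexGram_sq, sum_add_distrib, ← mul_sum, wordGram,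
      Matrix.sum_apply, sum_const, card_univ, nsmul_eq_mul]
    ring
  linarith

end Gram

-- The cubic vanishes at `d = 8, 11, 12` and is positive for `11 < d < 12`.
theorem cubic_certificate_nonpos {d : ℕ} (h8 : 8 ≤ d) (h14 : d ≤ 14) :
    ((28 - 3 * d : ℝ) - 4) * ((28 - 3 * d) + 5) * ((28 - 3 * d) + 8) ≤ 0 := by
  interval_cases d <;> norm_num

/-- `A₃(14, −1/7) ≤ 237`: every ternary code of length 14 with minimum Hamming
distance at least 8 has at most 237 codewords. -/
theorem stmt17 (Q : Type*) [Fintype Q] [DecidableEq Q] (hQ : Fintype.card Q = 3)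
    (C : Finset (Fin 14 → Q))
    (hC : ∀ x ∈ C, ∀ y ∈ C, x ≠ y → 8 ≤ hammingDist x y) :
    C.card ≤ 237 := by
  set S : Matrix (Fin 14 → Q) (Fin 14 → Q) ℝ := wordGram
  set E : Matrix (Fin 14 → Q) (Fin 14 → Q) ℝ := pairGram
  have hS : ∀ x y, S x y = 28 - 3 * hammingDist x y := fun x y => by
    simp only [S, wordGram_apply, hQ, Fintype.card_fin]; norm_num
  have hE : ∀ x y, E x y = S x y ^ 2 - S x y - 28 := fun x y => by
    simp only [E, S, pairGram_apply, hQ, Fintype.card_fin]; norm_num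
  set M := (13 / 60 : ℝ) • S + (1 / 12 : ℝ) • E + (1 / 120 : ℝ) • (S ⊙ E)
  have hM : M.PosSemidef :=
    ((posSemidef_wordGram.smul (by norm_num)).add (posSemidef_pairGram.smul (by norm_num))).add
      ((posSemidef_wordGram.hadamard posSemidef_pairGram).smul (by norm_num))
  have hf : ∀ x y, 1 + M x y = (S x y - 4) * (S x y + 5) * (S x y + 8) / 120 := fun x y => by
    simp only [M, Matrix.add_apply, Matrix.smul_apply, hadamard_apply, hE, smul_eq_mul]; ring
  have hcard : (#C : ℝ) ≤ 1188 / 5 :=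
    hM.card_le_of_diag_le_of_offDiag_nonpos C (by norm_num)
      (fun x _ => by rw [hf, hS, hammingDist_self]; norm_num)
      (fun x hx y hy hxy => by
        rw [hf, hS, div_nonpos_iff]
        exact .inr ⟨cubic_certificate_nonpos (hC x hx y hy hxy) hammingDist_le_card_fintype,
          by norm_num⟩)
  have : (#C : ℝ) < 238 := by linarith
  exact Nat.lt_succ_iff.mp (by exact_mod_cast this)
end

section
/- Every code C of length 11 over an alphabet of size 5 (i.e., C ⊆ Q^{11} with |Q| = 5) whose minimum Hamming distance is at least 8 satisfies |C| ≤ 250. -/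
open Finset

private lemma nat_cs {Q : Type*} (s : Finset Q) (f : Q → ℕ) :
    (∑ a ∈ s, f a) ^ 2 ≤ s.card * ∑ a ∈ s, f a ^ 2 := by
  have h := sq_sum_le_card_mul_sum_sq (s := s) (f := fun a => (f a : ℤ))
  exact_mod_cast h

private lemma hamming_as_sum {ι Q : Type*} [Fintype ι] [DecidableEq Q] (x y : ι → Q) :
    hammingDist x y = ∑ i, if x i = y i then 0 else 1 := by
  simp only [hammingDist, Finset.card_filter]
  exact Finset.sum_congr rfl fun i _ => by by_cases h : x i = y i <;> simp [h]

private lemma fiber_bound (Q : Type*) [Fintype Q] [DecidableEq Q]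
    (hQ : Fintype.card Q = 5) (F : Finset (Fin 11 → Q))
    (hd : ∀ x ∈ F, ∀ y ∈ F, x ≠ y → 8 ≤ hammingDist x y)
    (hc0 : ∀ x ∈ F, ∀ y ∈ F, x 0 = y 0)
    (hc1 : ∀ x ∈ F, ∀ y ∈ F, x 1 = y 1) :
    F.card ≤ 10 := by
  classical
  set M := F.card with hM
  set T : Fin 11 → ℕ := fun i => ∑ x ∈ F, ∑ y ∈ F, (if x i = y i then 0 else 1) with hT
  set S : ℕ := ∑ x ∈ F, ∑ y ∈ F, hammingDist x y with hS
  -- lower bound on S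
  have hlow : 8 * (M * (M - 1)) ≤ S := by
    have h1 : ∀ x ∈ F, 8 * (M - 1) ≤ ∑ y ∈ F, hammingDist x y := by
      intro x hx
      calc 8 * (M - 1) = ∑ _y ∈ F.erase x, 8 := by
            rw [sum_const, card_erase_of_mem hx, smul_eq_mul, mul_comm]
        _ ≤ ∑ y ∈ F.erase x, hammingDist x y :=
            sum_le_sum fun y hy => hd x hx y (mem_of_mem_erase hy)
              (Ne.symm (ne_of_mem_erase hy))
        _ ≤ ∑ y ∈ F, hammingDist x y := sum_le_sum_of_subset (erase_subset _ _)
    calc 8 * (M * (M - 1)) = ∑ _x ∈ F, 8 * (M - 1) := by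
          rw [sum_const, smul_eq_mul]; ring
      _ ≤ S := sum_le_sum h1
  -- S as a sum over coordinates
  have hsw : S = ∑ i : Fin 11, T i := by
    have e1 : ∀ x ∈ F, ∑ y ∈ F, hammingDist x y
        = ∑ i : Fin 11, ∑ y ∈ F, (if x i = y i then 0 else 1) := by
      intro x _
      simp only [hamming_as_sum]
      exact Finset.sum_comm
    rw [hS, sum_congr rfl e1, Finset.sum_comm]
  -- per coordinate bound
  have key : ∀ i : Fin 11, 5 * T i ≤ 4 * M ^ 2 := by
    intro i
    set c : Q → ℕ := fun a => (F.filter fun x => x i = a).card with hcdef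
    have hsum : ∑ a : Q, c a = M :=
      (card_eq_sum_card_fiberwise (fun x _ => mem_univ (x i))).symm
    have hE : ∑ x ∈ F, ∑ y ∈ F, (if x i = y i then 1 else 0) = ∑ a : Q, c a ^ 2 := by
      have h1 : ∀ x ∈ F, ∑ y ∈ F, (if x i = y i then 1 else 0) = c (x i) := by
        intro x hx
        rw [hcdef]
        simp only [card_filter]
        exact sum_congr rfl fun y _ => by by_cases h : x i = y i <;> simp [h, eq_comm]
      rw [sum_congr rfl h1,
        ← sum_fiberwise_of_maps_to (g := fun x => x i) (fun x _ => mem_univ (x i))]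
      refine sum_congr rfl fun a _ => ?_
      have : ∀ x ∈ F.filter (fun x => x i = a), c (x i) = c a := by
        intro x hx
        rw [(mem_filter.mp hx).2]
      rw [sum_congr rfl this, sum_const, smul_eq_mul]
      exact (sq (c a)).symm
    have hTE : T i + ∑ x ∈ F, ∑ y ∈ F, (if x i = y i then 1 else 0) = M ^ 2 := by
      simp only [hT]
      rw [← sum_add_distrib]
      have : ∀ x ∈ F, ((∑ y ∈ F, (if x i = y i then 0 else 1)) +
          ∑ y ∈ F, (if x i = y i then 1 else 0)) = M := by
        intro x _
        rw [← sum_add_distrib]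
        have : ∀ y ∈ F, ((if x i = y i then 0 else 1) + (if x i = y i then 1 else 0)) = 1 :=
          fun y _ => by by_cases h : x i = y i <;> simp [h]
        rw [sum_congr rfl this, sum_const, smul_eq_mul, mul_one]
      rw [sum_congr rfl this, sum_const, smul_eq_mul, sq]
    have hC : M ^ 2 ≤ 5 * ∑ a : Q, c a ^ 2 := by
      have := nat_cs (univ : Finset Q) c
      rw [hsum, card_univ, hQ] at this
      exact this
    rw [hE] at hTE
    linarith
  -- coordinates 0 and 1 contribute 0
  have hT0 : T 0 = 0 := by
    simp only [hT]
    refine sum_eq_zero fun x hx => sum_eq_zero fun y hy => ?_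
    rw [if_pos (hc0 x hx y hy)]
  have hT1 : T 1 = 0 := by
    simp only [hT]
    refine sum_eq_zero fun x hx => sum_eq_zero fun y hy => ?_
    rw [if_pos (hc1 x hx y hy)]
  -- upper bound on 5 * S
  have hup : 5 * S ≤ 36 * M ^ 2 := by
    rw [hsw, Fin.sum_univ_succ, Fin.sum_univ_succ]
    have e1 : ((0 : Fin 10).succ : Fin 11) = 1 := rfl
    rw [e1, hT0, hT1]
    have h9 : 5 * ∑ i : Fin 9, T i.succ.succ ≤ 9 * (4 * M ^ 2) := by
      rw [Finset.mul_sum]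
      calc ∑ i : Fin 9, 5 * T i.succ.succ ≤ ∑ _i : Fin 9, 4 * M ^ 2 :=
            sum_le_sum fun i _ => key _
        _ = 9 * (4 * M ^ 2) := by
            rw [sum_const, card_univ, Fintype.card_fin, smul_eq_mul]
    calc 5 * (0 + (0 + ∑ i : Fin 9, T i.succ.succ))
        = 5 * ∑ i : Fin 9, T i.succ.succ := by ring
      _ ≤ 9 * (4 * M ^ 2) := h9
      _ = 36 * M ^ 2 := by ring
  -- conclude
  have h40 : 40 * (M * (M - 1)) ≤ 36 * M ^ 2 := by
    have := Nat.mul_le_mul_left 5 hlow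
    linarith
  rcases Nat.lt_or_ge M 11 with h | h
  · omega
  · exfalso
    zify [show 1 ≤ M by omega] at h40
    have hM' : (11 : ℤ) ≤ (M : ℤ) := by exact_mod_cast h
    nlinarith [h40, hM']

/-- `A₅(11, −5/11) ≤ 250`: every quinary code of length 11 with minimum Hamming
distance at least 8 has at most 250 codewords. -/
theorem stmt18 (Q : Type*) [Fintype Q] [DecidableEq Q] (hQ : Fintype.card Q = 5)
    (C : Finset (Fin 11 → Q))
    (hC : ∀ x ∈ C, ∀ y ∈ C, x ≠ y → 8 ≤ hammingDist x y) :
    C.card ≤ 250 := by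
  classical
  have hcard : C.card = ∑ p : Q × Q, (C.filter fun x => (x 0, x 1) = p).card :=
    card_eq_sum_card_fiberwise (fun x _ => mem_univ _)
  rw [hcard]
  have hfib : ∀ p : Q × Q, (C.filter fun x => (x 0, x 1) = p).card ≤ 10 := by
    intro p
    refine fiber_bound Q hQ _ ?_ ?_ ?_
    · intro x hx y hy hxy
      exact hC x (mem_filter.mp hx).1 y (mem_filter.mp hy).1 hxy
    · intro x hx y hy
      have h1 := (mem_filter.mp hx).2
      have h2 := (mem_filter.mp hy).2
      rw [Prod.ext_iff] at h1 h2
      simp only at h1 h2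
      rw [h1.1, h2.1]
    · intro x hx y hy
      have h1 := (mem_filter.mp hx).2
      have h2 := (mem_filter.mp hy).2
      rw [Prod.ext_iff] at h1 h2
      simp only at h1 h2
      rw [h1.2, h2.2]
  calc ∑ p : Q × Q, (C.filter fun x => (x 0, x 1) = p).card
      ≤ ∑ _p : Q × Q, 10 := sum_le_sum fun p _ => hfib p
    _ = 250 := by rw [sum_const, card_univ, Fintype.card_prod, hQ, smul_eq_mul]
end
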